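/- arXiv:1405.0356 — 11 statements merged into one kernel-verified Lean document; each statement's English description precedes it below -/
import Mathlib

section
/- Let R > 0 and let (a_n), (b_n) be sequences of complex numbers such that the power series Σ_{n≥0} a_n ζ^n/n! and Σ_{n≥0} b_n ζ^n/n! both have radius of convergence ≥ R; call Φ and Ψ their sums on the disc D(0,R). Then the function Φ*Ψ(ζ) := ∫₀^1 ζ·Φ(sζ)·Ψ((1−s)ζ) ds is holomorphic on D(0,R), the power series Σ_{n≥0} c_n ζ^{n+1}/(n+1)! with c_n = Σ_{p+q=n} a_p b_q has radius of convergence ≥ R, and its sum equals Φ*Ψ on D(0,R). -/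
/-!
Expand `Φ(sζ) Ψ((1-s)ζ)` as the double series `Σ_{p,q} a_p b_q (sζ)^p ((1-s)ζ)^q / (p! q!)`.
Since `|sζ|, |(1-s)ζ| ≤ |ζ|` for `s ∈ [0,1]`, it is dominated by the product of the two absolutely
convergent series at `ζ`, so it may be integrated term by term. The Beta integral
`∫₀¹ s^p (1-s)^q ds = p! q! / (p+q+1)!` turns the `(p,q)` term into `a_p b_q ζ^{p+q+1}/(p+q+1)!`, and
grouping by `p + q = n` gives `Σ cₙ ζ^{n+1}/(n+1)!`. Convergence of this series at every real
`r < R` bounds its radius of convergence from below, which gives holomorphy on `D(0,R)`.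
-/

open MeasureTheory Finset Nat

theorem HasSum.sum_antidiagonal {α A : Type*} [AddCommMonoid α] [TopologicalSpace α]
    [ContinuousAdd α] [RegularSpace α] [AddCommMonoid A] [HasAntidiagonal A]
    {f : A × A → α} {s : α} (h : HasSum f s) :
    HasSum (fun n => ∑ kl ∈ antidiagonal n, f kl) s :=
  (HasAntidiagonal.sigmaAntidiagonalEquivProd.hasSum_iff.mpr h).sigma
    fun n => (antidiagonal n).hasSum f

theorem hasSum_intervalIntegral_mul_tsum {ι κ E : Type*} [Countable ι] [Countable κ]
    [NormedRing E] [NormedAlgebra ℝ E] [CompleteSpace E] {a b : ℝ}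
    {u : ι → ℝ → E} {v : κ → ℝ → E} {U : ι → ℝ} {V : κ → ℝ}
    (hu : ∀ i, Continuous (u i)) (hv : ∀ k, Continuous (v k))
    (hU : Summable U) (hV : Summable V)
    (huU : ∀ i, ∀ s ∈ Set.uIcc a b, ‖u i s‖ ≤ U i)
    (hvV : ∀ k, ∀ s ∈ Set.uIcc a b, ‖v k s‖ ≤ V k) :
    HasSum (fun ik : ι × κ => ∫ s in a..b, u ik.1 s * v ik.2 s)
      (∫ s in a..b, (∑' i, u i s) * ∑' k, v k s) := by
  have hU0 : ∀ i, 0 ≤ U i := fun i => (norm_nonneg _).trans (huU i a Set.left_mem_uIcc)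
  have hV0 : ∀ k, 0 ≤ V k := fun k => (norm_nonneg _).trans (hvV k a Set.left_mem_uIcc)
  refine intervalIntegral.hasSum_integral_of_dominated_convergence
    (fun ik _ => U ik.1 * V ik.2) (fun ik => ((hu ik.1).mul (hv ik.2)).aestronglyMeasurable)
    (fun ik => ae_of_all _ fun s hs => ?_)
    (ae_of_all _ fun _ _ => hU.mul_of_nonneg hV hU0 hV0) intervalIntegrable_const
    (ae_of_all _ fun s hs => ?_)
  · have hs' := Set.uIoc_subset_uIcc hs
    exact (norm_mul_le _ _).trans
      (mul_le_mul (huU _ s hs') (hvV _ s hs') (norm_nonneg _) (hU0 _))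
  · have hs' := Set.uIoc_subset_uIcc hs
    have hus : Summable fun i => ‖u i s‖ :=
      hU.of_nonneg_of_le (fun _ => norm_nonneg _) fun i => huU i s hs'
    have hvs : Summable fun k => ‖v k s‖ :=
      hV.of_nonneg_of_le (fun _ => norm_nonneg _) fun k => hvV k s hs'
    rw [tsum_mul_tsum_of_summable_norm hus hvs]
    exact (summable_mul_of_summable_norm hus hvs).hasSum

theorem differentiableOn_tsum_mul_pow {𝕜 : Type*} [NontriviallyNormedField 𝕜] [CompleteSpace 𝕜]
    {d : ℕ → 𝕜} {R : ℝ} (hd : ∀ r : ℝ, 0 < r → r < R → Summable fun n => ‖d n‖ * r ^ n) :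
    DifferentiableOn 𝕜 (fun ζ => ∑' n, d n * ζ ^ n) (Metric.ball 0 R) := by
  set P := FormalMultilinearSeries.ofScalars 𝕜 d
  have hradius : ENNReal.ofReal R ≤ P.radius := by
    refine ENNReal.le_of_forall_pos_nnreal_lt fun r hr hrR => P.le_radius_of_summable ?_
    have hrR' : (r : ℝ) < R :=
      (ENNReal.ofReal_lt_ofReal_iff'.mp (by rwa [ENNReal.ofReal_coe_nnreal])).1
    simpa only [P, FormalMultilinearSeries.ofScalars_norm] using hd r hr hrR'
  have hball : Metric.ball (0 : 𝕜) R ⊆ Metric.eball 0 P.radius := fun ζ hζ => by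
    rw [Metric.mem_eball, edist_dist]
    exact ((ENNReal.ofReal_lt_ofReal_iff_of_nonneg dist_nonneg).mpr hζ).trans_le hradius
  refine (P.analyticOnNhd.differentiableOn.mono hball).congr fun ζ _ => ?_
  exact (FormalMultilinearSeries.ofScalars_sum_eq d ζ).symm

theorem intervalIntegral_ofReal_pow_mul_one_sub_pow (p q : ℕ) :
    ∫ s in (0:ℝ)..1, (s : ℂ) ^ p * (1 - (s : ℂ)) ^ q =
      (p ! : ℂ) * q ! / (p + q + 1)! := by
  have hre : ∀ k : ℕ, 0 < ((k : ℂ) + 1).re := fun k => by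
    simp only [Complex.add_re, Complex.natCast_re, Complex.one_re]
    positivity
  have hbeta := Complex.betaIntegral_eq_Gamma_mul_div (p + 1) (q + 1) (hre p) (hre q)
  rw [show (p + 1 + (q + 1) : ℂ) = ((p + q + 1 : ℕ) : ℂ) + 1 by push_cast; ring,
    Complex.Gamma_nat_eq_factorial, Complex.Gamma_nat_eq_factorial,
    Complex.Gamma_nat_eq_factorial, Complex.betaIntegral] at hbeta
  rw [← hbeta]
  refine intervalIntegral.integral_congr fun s _ => ?_
  simp [← Complex.cpow_natCast]

theorem norm_ofReal_le_one_of_mem_Icc {s : ℝ} (hs : s ∈ Set.Icc (0 : ℝ) 1) :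
    ‖(s : ℂ)‖ ≤ 1 := by
  rw [Complex.norm_real, Real.norm_of_nonneg hs.1]
  exact hs.2

theorem norm_one_sub_ofReal_le_one_of_mem_Icc {s : ℝ} (hs : s ∈ Set.Icc (0 : ℝ) 1) :
    ‖1 - (s : ℂ)‖ ≤ 1 := by
  have h : 1 - s ∈ Set.Icc (0 : ℝ) 1 := ⟨by linarith [hs.2], by linarith [hs.1]⟩
  simpa using norm_ofReal_le_one_of_mem_Icc h

theorem norm_mul_pow_div_le_of_norm_le_one (x ζ w : ℂ) (n : ℕ) (hw : ‖w‖ ≤ 1) :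
    ‖x * (w * ζ) ^ n / (n ! : ℂ)‖ ≤ ‖x * ζ ^ n / (n ! : ℂ)‖ := by
  simp only [norm_div, norm_mul, norm_pow]
  gcongr
  exact mul_le_of_le_one_left (norm_nonneg _) hw

theorem intervalIntegral_borel_monomial_mul (x y ζ : ℂ) (p q : ℕ) :
    ζ * ∫ s in (0:ℝ)..1, x * ((s : ℂ) * ζ) ^ p / p ! * (y * ((1 - (s : ℂ)) * ζ) ^ q / q !) =
      x * y * ζ ^ (p + q + 1) / (p + q + 1)! := by
  have hterm : ∀ s : ℝ, x * ((s : ℂ) * ζ) ^ p / p ! * (y * ((1 - (s : ℂ)) * ζ) ^ q / q !) =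
      x * y * ζ ^ (p + q) / (p ! * q !) * ((s : ℂ) ^ p * (1 - (s : ℂ)) ^ q) := fun s => by
    rw [mul_pow, mul_pow]
    ring
  simp only [hterm, intervalIntegral.integral_const_mul,
    intervalIntegral_ofReal_pow_mul_one_sub_pow]
  have : (p ! : ℂ) ≠ 0 := Nat.cast_ne_zero.mpr (factorial_ne_zero p)
  have : (q ! : ℂ) ≠ 0 := Nat.cast_ne_zero.mpr (factorial_ne_zero q)
  field_simp
  ring

theorem hasSum_borel_cauchyProduct {a b : ℕ → ℂ} {ζ : ℂ}
    (ha : Summable fun n => a n * ζ ^ n / (n ! : ℂ))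
    (hb : Summable fun n => b n * ζ ^ n / (n ! : ℂ)) :
    HasSum (fun n => (∑ p ∈ range (n + 1), a p * b (n - p)) * ζ ^ (n + 1) / ((n + 1)! : ℂ))
      (∫ s in (0:ℝ)..1, ζ * (∑' n, a n * ((s : ℂ) * ζ) ^ n / (n ! : ℂ)) *
        (∑' n, b n * ((1 - (s : ℂ)) * ζ) ^ n / (n ! : ℂ))) := by
  have hIcc : Set.uIcc (0 : ℝ) 1 = Set.Icc 0 1 := Set.uIcc_of_le zero_le_one
  have hexchange := hasSum_intervalIntegral_mul_tsum
    (u := fun p s => a p * ((s : ℂ) * ζ) ^ p / (p ! : ℂ))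
    (v := fun q s => b q * ((1 - (s : ℂ)) * ζ) ^ q / (q ! : ℂ))
    (by fun_prop) (by fun_prop) (summable_norm_iff.mpr ha) (summable_norm_iff.mpr hb)
    (fun p s hs => norm_mul_pow_div_le_of_norm_le_one _ _ _ _
      (norm_ofReal_le_one_of_mem_Icc (hIcc ▸ hs)))
    (fun q s hs => norm_mul_pow_div_le_of_norm_le_one _ _ _ _
      (norm_one_sub_ofReal_le_one_of_mem_Icc (hIcc ▸ hs)))
  have hmonomials := hexchange.mul_left ζ
  simp only [intervalIntegral_borel_monomial_mul] at hmonomials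
  rw [← intervalIntegral.integral_const_mul] at hmonomials
  simp only [← mul_assoc] at hmonomials
  refine hmonomials.sum_antidiagonal.congr_fun fun n => ?_
  rw [Nat.sum_antidiagonal_eq_sum_range_succ_mk, sum_mul, sum_div]
  refine sum_congr rfl fun p hp => ?_
  rw [Nat.add_sub_cancel' (Nat.lt_succ_iff.mp (mem_range.mp hp))]

theorem stmt_1_general (R : ℝ) (a b : ℕ → ℂ)
    (ha : ∀ ζ ∈ Metric.ball (0 : ℂ) R,
      Summable (fun n : ℕ => a n * ζ ^ n / (Nat.factorial n : ℂ)))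
    (hb : ∀ ζ ∈ Metric.ball (0 : ℂ) R,
      Summable (fun n : ℕ => b n * ζ ^ n / (Nat.factorial n : ℂ))) :
    DifferentiableOn ℂ
        (fun ζ : ℂ => ∫ s in (0:ℝ)..1,
          ζ * (∑' n : ℕ, a n * ((s : ℂ) * ζ) ^ n / (Nat.factorial n : ℂ)) *
            (∑' n : ℕ, b n * ((1 - (s : ℂ)) * ζ) ^ n / (Nat.factorial n : ℂ)))
        (Metric.ball (0 : ℂ) R) ∧
      (∀ ζ ∈ Metric.ball (0 : ℂ) R,
        Summable (fun n : ℕ =>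
          (∑ p ∈ Finset.range (n + 1), a p * b (n - p)) * ζ ^ (n + 1) /
            (Nat.factorial (n + 1) : ℂ))) ∧
      ∀ ζ ∈ Metric.ball (0 : ℂ) R,
        (∑' n : ℕ, (∑ p ∈ Finset.range (n + 1), a p * b (n - p)) * ζ ^ (n + 1) /
            (Nat.factorial (n + 1) : ℂ)) =
          ∫ s in (0:ℝ)..1,
            ζ * (∑' n : ℕ, a n * ((s : ℂ) * ζ) ^ n / (Nat.factorial n : ℂ)) *
              (∑' n : ℕ, b n * ((1 - (s : ℂ)) * ζ) ^ n / (Nat.factorial n : ℂ)) := by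
  have hconv := fun ζ hζ => hasSum_borel_cauchyProduct (ha ζ hζ) (hb ζ hζ)
  refine ⟨?_, fun ζ hζ => (hconv ζ hζ).summable, fun ζ hζ => (hconv ζ hζ).tsum_eq⟩
  set c : ℕ → ℂ := fun n => (∑ p ∈ range (n + 1), a p * b (n - p)) / (n + 1)!
  have hc : ∀ r : ℝ, 0 < r → r < R → Summable fun n => ‖c n‖ * r ^ n := fun r hr hrR => by
    have hr' : (r : ℂ) ∈ Metric.ball 0 R := by simpa [abs_of_pos hr] using hrR
    refine ((summable_norm_iff.mpr (hconv _ hr').summable).div_const r).congr fun n => ?_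
    simp only [c, norm_div, norm_mul, norm_pow, Complex.norm_real, Real.norm_of_nonneg hr.le]
    field_simp
    ring
  have hdiff : DifferentiableOn ℂ (fun ζ : ℂ => ζ * ∑' n, c n * ζ ^ n) (Metric.ball 0 R) :=
    differentiableOn_id.mul (differentiableOn_tsum_mul_pow hc)
  refine hdiff.congr fun ζ hζ => ?_
  rw [← (hconv ζ hζ).tsum_eq, ← tsum_mul_left]
  refine tsum_congr fun n => ?_
  simp only [c]
  ring

/-- Convolution of two convergent Borel transforms: if `Σ aₙ ζⁿ/n!` and `Σ bₙ ζⁿ/n!`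
have radius of convergence at least `R`, with sums `Φ`, `Ψ`, then
`Φ*Ψ(ζ) = ∫₀¹ ζ Φ(sζ) Ψ((1-s)ζ) ds` is holomorphic on `D(0,R)`, and the power series
`Σ cₙ ζ^{n+1}/(n+1)!` with `cₙ = Σ_{p+q=n} a_p b_q` has radius of convergence at least `R`
and sums to `Φ*Ψ` there. -/
theorem stmt_1 (R : ℝ) (hR : 0 < R) (a b : ℕ → ℂ)
    (ha : ∀ ζ ∈ Metric.ball (0 : ℂ) R,
      Summable (fun n : ℕ => a n * ζ ^ n / (Nat.factorial n : ℂ)))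
    (hb : ∀ ζ ∈ Metric.ball (0 : ℂ) R,
      Summable (fun n : ℕ => b n * ζ ^ n / (Nat.factorial n : ℂ))) :
    DifferentiableOn ℂ
        (fun ζ : ℂ => ∫ s in (0:ℝ)..1,
          ζ * (∑' n : ℕ, a n * ((s : ℂ) * ζ) ^ n / (Nat.factorial n : ℂ)) *
            (∑' n : ℕ, b n * ((1 - (s : ℂ)) * ζ) ^ n / (Nat.factorial n : ℂ)))
        (Metric.ball (0 : ℂ) R) ∧
      (∀ ζ ∈ Metric.ball (0 : ℂ) R,
        Summable (fun n : ℕ =>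
          (∑ p ∈ Finset.range (n + 1), a p * b (n - p)) * ζ ^ (n + 1) /
            (Nat.factorial (n + 1) : ℂ))) ∧
      ∀ ζ ∈ Metric.ball (0 : ℂ) R,
        (∑' n : ℕ, (∑ p ∈ Finset.range (n + 1), a p * b (n - p)) * ζ ^ (n + 1) /
            (Nat.factorial (n + 1) : ℂ)) =
          ∫ s in (0:ℝ)..1,
            ζ * (∑' n : ℕ, a n * ((s : ℂ) * ζ) ^ n / (Nat.factorial n : ℂ)) *
              (∑' n : ℕ, b n * ((1 - (s : ℂ)) * ζ) ^ n / (Nat.factorial n : ℂ)) :=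
  stmt_1_general R a b ha hb
end

section
/- Let c₀ ≥ 0, δ > 0, A > 0 and let φ̂ be holomorphic on the half-strip S_δ = {ζ ∈ ℂ : dist(ζ, ℝ≥0) < δ} with |φ̂(ζ)| ≤ A·e^{c₀|ζ|} for all ζ ∈ S_δ. Set a_n := φ̂^{(n)}(0) (the n-th complex derivative of φ̂ at 0) and φ(z) := ∫₀^{+∞} e^{−zζ} φ̂(ζ) dζ for Re z > c₀. Then for every c₁ > c₀ there exist L, M > 0 such that |φ(z) − a₀z^{−1} − a₁z^{−2} − ⋯ − a_{N−1}z^{−N}| ≤ L·M^N·N!·|z|^{−N−1} for every z ∈ ℂ with Re z > c₁ and every N ∈ ℕ. -/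
open MeasureTheory

/-- The half-strip `S_δ = {ζ ∈ ℂ : dist(ζ, ℝ≥0) < δ}`. -/
def halfStrip (δ : ℝ) : Set ℂ :=
  {ζ : ℂ | Metric.infDist ζ (Complex.ofReal '' Set.Ici (0 : ℝ)) < δ}

/-!
Integrating by parts `N + 1` times,
`φ(z) - ∑_{n<N} aₙ z⁻ⁿ⁻¹ = (a_N + 𝓛[φ̂^(N+1)](z)) / z^(N+1)`.
The extra step is what produces the full power `|z|^(-N-1)`: the Laplace integral itself is only
bounded by `1 / (Re z - c₀)`, not by `1 / |z|`. Cauchy's estimates on discs of radius `δ/2`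
centred on `ℝ≥0` give `|φ̂^(n)(t)| ≤ A e^{c₀ (t + δ/2)} n! (2/δ)ⁿ`, so both terms are of size
`n! (2/δ)ⁿ` up to a factor `n + 1 ≤ 2ⁿ`.
-/

open Set Metric Filter Topology
open scoped Complex Nat

noncomputable def laplace (f : ℂ → ℂ) (z : ℂ) : ℂ :=
  ∫ t in Ioi (0 : ℝ), cexp (-z * t) * f t

section Laplace

variable {f : ℂ → ℂ} {C C' c : ℝ} {z : ℂ}

lemma norm_cexp_neg_mul_mul_le (hbound : ∀ t : ℝ, 0 ≤ t → ‖f t‖ ≤ C * Real.exp (c * t))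
    {t : ℝ} (ht : 0 ≤ t) :
    ‖cexp (-z * t) * f t‖ ≤ C * Real.exp (-(z.re - c) * t) := by
  have hre : (-z * t).re = -z.re * t := by simp
  calc ‖cexp (-z * t) * f t‖ ≤ Real.exp (-z.re * t) * (C * Real.exp (c * t)) := by
        rw [norm_mul, Complex.norm_exp, hre]; gcongr; exact hbound t ht
    _ = C * Real.exp (-(z.re - c) * t) := by rw [mul_left_comm, ← Real.exp_add]; ring_nf

lemma integrableOn_laplace_integrand (hf : ContinuousOn (fun t : ℝ => f t) (Ici 0))
    (hbound : ∀ t : ℝ, 0 ≤ t → ‖f t‖ ≤ C * Real.exp (c * t)) (hz : c < z.re) :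
    IntegrableOn (fun t : ℝ => cexp (-z * t) * f t) (Ioi 0) := by
  refine Integrable.mono' ((exp_neg_integrableOn_Ioi 0 (sub_pos.2 hz)).const_mul C) ?_ ?_
  · have hexp : Continuous fun t : ℝ => cexp (-z * t) := by fun_prop
    exact ((hexp.continuousOn.mul hf).mono Ioi_subset_Ici_self).aestronglyMeasurable
      measurableSet_Ioi
  · filter_upwards [ae_restrict_mem measurableSet_Ioi] with t ht
    exact norm_cexp_neg_mul_mul_le hbound (le_of_lt ht)

lemma norm_laplace_le (hbound : ∀ t : ℝ, 0 ≤ t → ‖f t‖ ≤ C * Real.exp (c * t))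
    (hz : c < z.re) :
    ‖laplace f z‖ ≤ C / (z.re - c) := by
  have hb : 0 < z.re - c := sub_pos.2 hz
  calc ‖laplace f z‖ ≤ ∫ t in Ioi (0 : ℝ), C * Real.exp (-(z.re - c) * t) :=
        norm_integral_le_of_norm_le ((exp_neg_integrableOn_Ioi 0 hb).const_mul C) <|
          (ae_restrict_mem measurableSet_Ioi).mono fun t ht =>
            norm_cexp_neg_mul_mul_le hbound (le_of_lt ht)
    _ = C / (z.re - c) := by
        rw [integral_const_mul, integral_exp_mul_Ioi (neg_lt_zero.2 hb)]
        rw [mul_zero, Real.exp_zero, neg_div_neg_eq, mul_one_div]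

lemma mul_laplace_eq (hf : ∀ t : ℝ, 0 ≤ t → DifferentiableAt ℂ f t)
    (hf' : ContinuousOn (fun t : ℝ => deriv f t) (Ici 0))
    (hbound : ∀ t : ℝ, 0 ≤ t → ‖f t‖ ≤ C * Real.exp (c * t))
    (hbound' : ∀ t : ℝ, 0 ≤ t → ‖deriv f t‖ ≤ C' * Real.exp (c * t)) (hz : c < z.re) :
    z * laplace f z = f 0 + laplace (deriv f) z := by
  set F : ℝ → ℂ := fun t => cexp (-z * t) * f t with hF
  have hderiv : ∀ t ∈ Ici (0 : ℝ),
      HasDerivAt F (-z * F t + cexp (-z * t) * deriv f t) t := by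
    intro t ht
    have hexp : HasDerivAt (fun w : ℂ => cexp (-z * w)) (cexp (-z * t) * -z) t := by
      simpa using ((hasDerivAt_id (t : ℂ)).const_mul (-z)).cexp
    refine ((hexp.mul (hf t ht).hasDerivAt).comp_ofReal).congr_deriv ?_
    simp only [hF]
    ring
  have hcont : ContinuousOn (fun t : ℝ => f t) (Ici 0) := fun t ht =>
    ((hf t ht).continuousAt.comp Complex.continuous_ofReal.continuousAt).continuousWithinAt
  have hint := integrableOn_laplace_integrand hcont hbound hz
  have hint' := integrableOn_laplace_integrand hf' hbound' hz
  have hlim : Tendsto F atTop (𝓝 0) := by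
    have hdecay : Tendsto (fun t : ℝ => C * Real.exp (-(z.re - c) * t)) atTop (𝓝 0) := by
      simpa using (Real.tendsto_exp_atBot.comp
        (tendsto_id.const_mul_atTop_of_neg (neg_lt_zero.2 (sub_pos.2 hz)))).const_mul C
    refine squeeze_zero_norm' ?_ hdecay
    filter_upwards [eventually_ge_atTop 0] with t ht
    exact norm_cexp_neg_mul_mul_le hbound ht
  have key := integral_Ioi_of_hasDerivAt_of_tendsto' hderiv ((hint.const_mul (-z)).add hint') hlim
  rw [integral_add (hint.const_mul _) hint', integral_const_mul] at key
  simp only [hF, Complex.ofReal_zero, mul_zero, Complex.exp_zero, one_mul] at key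
  unfold laplace
  linear_combination -key

lemma laplace_sub_sum_eq {C : ℕ → ℝ} (hf : ∀ t : ℝ, 0 ≤ t → AnalyticAt ℂ f t)
    (hbound : ∀ n, ∀ t : ℝ, 0 ≤ t → ‖iteratedDeriv n f t‖ ≤ C n * Real.exp (c * t))
    (hz : c < z.re) (hz0 : z ≠ 0) (N : ℕ) :
    laplace f z - ∑ n ∈ Finset.range N, iteratedDeriv n f 0 / z ^ (n + 1) =
      (iteratedDeriv N f 0 + laplace (iteratedDeriv (N + 1) f) z) / z ^ (N + 1) := by
  have step : ∀ n, z * laplace (iteratedDeriv n f) z =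
      iteratedDeriv n f 0 + laplace (iteratedDeriv (n + 1) f) z := by
    intro n
    have han : ∀ t : ℝ, 0 ≤ t → AnalyticAt ℂ (iteratedDeriv n f) t := fun t ht => by
      rw [iteratedDeriv_eq_iterate]; exact (hf t ht).iterated_deriv n
    have hbound' := hbound (n + 1)
    rw [iteratedDeriv_succ] at hbound' ⊢
    exact mul_laplace_eq (fun t ht => (han t ht).differentiableAt)
      (fun t ht => ((han t ht).deriv.continuousAt.comp
        Complex.continuous_ofReal.continuousAt).continuousWithinAt)
      (hbound n) hbound' hz
  induction N with
  | zero =>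
    rw [Finset.sum_range_zero, sub_zero, zero_add, pow_one, ← step 0, iteratedDeriv_zero]
    field_simp
  | succ N ih =>
    rw [Finset.sum_range_succ, ← sub_sub, ih, ← step (N + 1)]
    field_simp
    ring

lemma one_add_succ_mul_le_two_pow_mul {q : ℝ} (hq : 0 ≤ q) (N : ℕ) :
    1 + (N + 1) * q ≤ 2 ^ N * (1 + q) := by
  have h1 : (1 : ℝ) ≤ 2 ^ N := one_le_pow₀ one_le_two
  have h2 : (N + 1 : ℝ) ≤ 2 ^ N := by exact_mod_cast Nat.lt_two_pow_self
  nlinarith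

lemma norm_laplace_sub_sum_le {K ρ : ℝ} (hK : 0 ≤ K) (hρ : 0 ≤ ρ)
    (hf : ∀ t : ℝ, 0 ≤ t → AnalyticAt ℂ f t)
    (hbound : ∀ n, ∀ t : ℝ, 0 ≤ t →
      ‖iteratedDeriv n f t‖ ≤ K * n ! * ρ ^ n * Real.exp (c * t))
    (hz : c < z.re) (hz0 : z ≠ 0) (N : ℕ) :
    ‖laplace f z - ∑ n ∈ Finset.range N, iteratedDeriv n f 0 / z ^ (n + 1)‖ ≤
      K * (1 + ρ / (z.re - c)) * (2 * ρ) ^ N * N ! * ‖z‖⁻¹ ^ (N + 1) := by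
  rw [laplace_sub_sum_eq hf hbound hz hz0, norm_div, norm_pow, div_eq_mul_inv, ← inv_pow]
  gcongr
  have ha : ‖iteratedDeriv N f 0‖ ≤ K * N ! * ρ ^ N := by simpa using hbound N 0 le_rfl
  have hq : 0 ≤ ρ / (z.re - c) := div_nonneg hρ (sub_pos.2 hz).le
  calc _ ≤ K * N ! * ρ ^ N + K * (N + 1)! * ρ ^ (N + 1) / (z.re - c) :=
        norm_add_le_of_le ha (norm_laplace_le (hbound (N + 1)) hz)
    _ = K * N ! * ρ ^ N * (1 + (N + 1) * (ρ / (z.re - c))) := by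
        push_cast [Nat.factorial_succ]; ring
    _ ≤ K * N ! * ρ ^ N * (2 ^ N * (1 + ρ / (z.re - c))) := by
        gcongr; exact one_add_succ_mul_le_two_pow_mul hq N
    _ = K * (1 + ρ / (z.re - c)) * (2 * ρ) ^ N * N ! := by rw [mul_pow]; ring

end Laplace

lemma isOpen_halfStrip (δ : ℝ) : IsOpen (halfStrip δ) :=
  isOpen_lt (continuous_infDist_pt _) continuous_const

lemma closedBall_subset_halfStrip {δ r t : ℝ} (ht : 0 ≤ t) (hr : r < δ) :
    closedBall (t : ℂ) r ⊆ halfStrip δ := fun _ hw =>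
  (infDist_le_dist_of_mem (mem_image_of_mem _ ht)).trans_lt (lt_of_le_of_lt hw hr)

lemma norm_iteratedDeriv_le_of_halfStrip {c₀ δ A : ℝ} {g : ℂ → ℂ} (hc₀ : 0 ≤ c₀)
    (hδ : 0 < δ) (hA : 0 ≤ A) (hol : DifferentiableOn ℂ g (halfStrip δ))
    (hbd : ∀ ζ ∈ halfStrip δ, ‖g ζ‖ ≤ A * Real.exp (c₀ * ‖ζ‖)) (n : ℕ) {t : ℝ} (ht : 0 ≤ t) :
    ‖iteratedDeriv n g t‖ ≤
      A * Real.exp (c₀ * (δ / 2)) * n ! * (2 / δ) ^ n * Real.exp (c₀ * t) := by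
  have hr : δ / 2 < δ := half_lt_self hδ
  have hsphere : ∀ w ∈ sphere (t : ℂ) (δ / 2), ‖g w‖ ≤ A * Real.exp (c₀ * (t + δ / 2)) := by
    intro w hw
    have hw' : ‖w‖ ≤ t + δ / 2 := by
      calc ‖w‖ ≤ ‖(t : ℂ)‖ + ‖w - t‖ := norm_le_insert' w t
        _ = t + δ / 2 := by
          rw [mem_sphere_iff_norm.1 hw, Complex.norm_real, Real.norm_of_nonneg ht]
    refine (hbd w (closedBall_subset_halfStrip ht hr (sphere_subset_closedBall hw))).trans ?_
    gcongr
  calc ‖iteratedDeriv n g t‖ ≤ n ! * (A * Real.exp (c₀ * (t + δ / 2))) / (δ / 2) ^ n :=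
        Complex.norm_iteratedDeriv_le_of_forall_mem_sphere_norm_le n (half_pos hδ)
          (hol.diffContOnCl_ball (closedBall_subset_halfStrip ht hr)) hsphere
    _ = _ := by rw [mul_add, Real.exp_add, div_pow, div_pow]; field_simp

/-- The Laplace transform along `ℝ⁺` of a function holomorphic with at most exponential
growth on a half-strip around `ℝ≥0` admits the associated formal series as uniform
1-Gevrey asymptotic expansion on every half-plane `{Re z > c₁}` with `c₁ > c₀`. -/
theorem stmt_2 (c₀ δ A : ℝ) (hc₀ : 0 ≤ c₀) (hδ : 0 < δ) (hA : 0 < A) (φhat : ℂ → ℂ)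
    (hol : DifferentiableOn ℂ φhat (halfStrip δ))
    (hbd : ∀ ζ ∈ halfStrip δ, ‖φhat ζ‖ ≤ A * Real.exp (c₀ * ‖ζ‖)) :
    ∀ c₁ : ℝ, c₀ < c₁ → ∃ L M : ℝ, 0 < L ∧ 0 < M ∧
      ∀ z : ℂ, c₁ < z.re → ∀ N : ℕ,
        ‖(∫ t in Set.Ioi (0:ℝ), Complex.exp (-z * (t : ℂ)) * φhat (t : ℂ)) -
            (∑ n ∈ Finset.range N, iteratedDeriv n φhat 0 / z ^ (n + 1))‖ ≤
          L * M ^ N * (Nat.factorial N : ℝ) * ‖z‖⁻¹ ^ (N + 1) := by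
  intro c₁ hc₁
  set K := A * Real.exp (c₀ * (δ / 2))
  set ρ := 2 / δ
  have hφ : ∀ t : ℝ, 0 ≤ t → AnalyticAt ℂ φhat t := fun t ht =>
    hol.analyticOnNhd (isOpen_halfStrip δ) _
      (closedBall_subset_halfStrip ht hδ (mem_closedBall_self le_rfl))
  refine ⟨K * (1 + ρ / (c₁ - c₀)), 2 * ρ, by positivity, by positivity, fun z hz N => ?_⟩
  have hz₀ : c₀ < z.re := hc₁.trans hz
  have hz0 : z ≠ 0 := by rintro rfl; simp at hz₀; linarith
  calc _ ≤ K * (1 + ρ / (z.re - c₀)) * (2 * ρ) ^ N * N ! * ‖z‖⁻¹ ^ (N + 1) :=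
        norm_laplace_sub_sum_le (by positivity) (by positivity) hφ
          (fun n t ht => norm_iteratedDeriv_le_of_halfStrip hc₀ hδ hA.le hol hbd n ht) hz₀ hz0 N
    _ ≤ _ := by gcongr
end

section
/- Let θ₁, θ₂ ∈ ℝ with 0 < θ₂ − θ₁ < π, let c ∈ ℝ, A > 0, and let φ̂ be holomorphic on an open subset of ℂ containing the closed sector Σ = {ξ·e^{iθ} : ξ ≥ 0, θ ∈ [θ₁, θ₂]}, with |φ̂(ζ)| ≤ A·e^{c|ζ|} for all ζ ∈ Σ. Then the set {z ∈ ℂ : Re(z·e^{iθ₁}) > c and Re(z·e^{iθ₂}) > c} is nonempty, and for every z in this set one has ∫₀^{+∞} e^{−z·ξe^{iθ₁}} φ̂(ξe^{iθ₁}) e^{iθ₁} dξ = ∫₀^{+∞} e^{−z·ξe^{iθ₂}} φ̂(ξe^{iθ₂}) e^{iθ₂} dξ. -/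
/-! In logarithmic coordinates `ζ = exp w` the closed sector becomes the horizontal strip
`θ₁ ≤ im w ≤ θ₂` and its two bounding rays become the boundary lines of the strip. Cauchy's
theorem on the strip therefore identifies the two Laplace transforms at every `z` with
`c < re (z * exp (i θ))` for all intermediate directions `θ`: the exponential bound makes the
vertical cross-sections of the strip negligible. Because `θ₂ - θ₁ < π`, such `z` fill a ball
inside the intersection of the two half-planes of convergence; this intersection is convex, both
transforms are holomorphic on it, and the identity theorem extends the equality to all of it. -/

open MeasureTheory

/-- The closed sector `{ξ·e^{iθ} : ξ ≥ 0, θ ∈ [θ₁, θ₂]}`. -/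
def closedSector (θ₁ θ₂ : ℝ) : Set ℂ :=
  {ζ : ℂ | ∃ ξ θ : ℝ, 0 ≤ ξ ∧ θ₁ ≤ θ ∧ θ ≤ θ₂ ∧
    ζ = (ξ : ℂ) * Complex.exp ((θ : ℂ) * Complex.I)}

open Set Filter Topology Complex
open scoped Real Interval

noncomputable def laplaceTransform (g : ℝ → ℂ) (s : ℂ) : ℂ :=
  ∫ ξ : ℝ in Ioi 0, cexp (-s * ξ) * g ξ

section Laplace

variable {g : ℝ → ℂ} {A c : ℝ}

lemma norm_cexp_neg_mul_ofReal (s : ℂ) (ξ : ℝ) : ‖cexp (-s * ξ)‖ = rexp (-s.re * ξ) := by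
  simp [Complex.norm_exp]

lemma norm_laplace_integrand_le {s : ℂ} {ξ : ℝ} (hg : ‖g ξ‖ ≤ A * rexp (c * ξ)) :
    ‖cexp (-s * ξ) * g ξ‖ ≤ A * rexp (-(s.re - c) * ξ) := by
  calc ‖cexp (-s * ξ) * g ξ‖ ≤ rexp (-s.re * ξ) * (A * rexp (c * ξ)) := by
        rw [norm_mul, norm_cexp_neg_mul_ofReal]; gcongr
    _ = A * rexp (-(s.re - c) * ξ) := by rw [mul_left_comm, ← Real.exp_add]; ring_nf

lemma integrableOn_laplace_integrand_s4 (hg : AEStronglyMeasurable g (volume.restrict (Ioi 0)))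
    (hbd : ∀ ξ ∈ Ioi (0 : ℝ), ‖g ξ‖ ≤ A * rexp (c * ξ)) {s : ℂ} (hs : c < s.re) :
    IntegrableOn (fun ξ : ℝ => cexp (-s * ξ) * g ξ) (Ioi 0) := by
  refine Integrable.mono' ((exp_neg_integrableOn_Ioi 0 (sub_pos.2 hs)).const_mul A)
    ((by fun_prop : Continuous fun ξ : ℝ => cexp (-s * ξ)).aestronglyMeasurable.mul hg) ?_
  filter_upwards [ae_restrict_mem measurableSet_Ioi] with ξ hξ
  exact norm_laplace_integrand_le (hbd ξ hξ)

lemma differentiableOn_laplaceTransform (hg : AEStronglyMeasurable g (volume.restrict (Ioi 0)))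
    (hbd : ∀ ξ ∈ Ioi (0 : ℝ), ‖g ξ‖ ≤ A * rexp (c * ξ)) :
    DifferentiableOn ℂ (laplaceTransform g) {s | c < s.re} := by
  intro s₀ hs₀
  have hA : 0 ≤ A := nonneg_of_mul_nonneg_left ((norm_nonneg _).trans (hbd 1 (mem_Ioi.2 one_pos)))
    (Real.exp_pos _)
  obtain ⟨ε, hε, hε_eq⟩ : ∃ ε, 0 < ε ∧ s₀.re - c = 2 * ε :=
    ⟨(s₀.re - c) / 2, half_pos (sub_pos.2 hs₀), by ring⟩
  have hmeas : ∀ s : ℂ, AEStronglyMeasurable (fun ξ : ℝ => cexp (-s * ξ) * g ξ)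
      (volume.restrict (Ioi 0)) := fun s =>
    (by fun_prop : Continuous fun ξ : ℝ => cexp (-s * ξ)).aestronglyMeasurable.mul hg
  have hderiv : ∀ (ξ : ℝ) (s : ℂ), HasDerivAt (fun s : ℂ => cexp (-s * ξ) * g ξ)
      (-ξ * (cexp (-s * ξ) * g ξ)) s := fun ξ s => by
    have hlin : HasDerivAt (fun s : ℂ => -s * ξ) (-ξ) s := by
      simpa using (hasDerivAt_id s).neg.mul_const (ξ : ℂ)
    exact (hlin.cexp.mul_const (g ξ)).congr_deriv (by ring)
  have hbound : ∀ᵐ ξ : ℝ ∂(volume.restrict (Ioi 0)), ∀ s ∈ Metric.ball s₀ ε,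
      ‖-(ξ : ℂ) * (cexp (-s * ξ) * g ξ)‖ ≤ A * (ξ ^ (1 : ℝ) * rexp (-ε * ξ ^ (1 : ℝ))) := by
    filter_upwards [ae_restrict_mem measurableSet_Ioi] with ξ (hξ : 0 < ξ) s hs
    have hre : ε ≤ s.re - c := by
      have := (abs_re_le_norm (s - s₀)).trans (mem_ball_iff_norm.1 hs).le
      rw [sub_re] at this
      linarith [(abs_le.1 this).1]
    rw [norm_mul, norm_neg, norm_real, Real.norm_of_nonneg hξ.le, Real.rpow_one]
    calc ξ * ‖cexp (-s * ξ) * g ξ‖ ≤ ξ * (A * rexp (-(s.re - c) * ξ)) := by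
          gcongr; exact norm_laplace_integrand_le (hbd ξ hξ)
      _ ≤ ξ * (A * rexp (-ε * ξ)) := by gcongr
      _ = A * (ξ * rexp (-ε * ξ)) := by ring
  exact (hasDerivAt_integral_of_dominated_loc_of_deriv_le (Metric.ball_mem_nhds s₀ hε)
    (Eventually.of_forall hmeas) (integrableOn_laplace_integrand_s4 hg hbd hs₀)
    ((Continuous.aestronglyMeasurable (by fun_prop)).mul (hmeas s₀)) hbound
    ((integrableOn_rpow_mul_exp_neg_mul_rpow (by norm_num) one_pos hε).const_mul A)
    (Eventually.of_forall fun ξ s _ => hderiv ξ s)).2.differentiableAt.differentiableWithinAt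

end Laplace

section ChangeOfVariables

variable {E : Type*} [NormedAddCommGroup E] [NormedSpace ℝ E]

lemma integral_exp_smul_comp_exp (g : ℝ → E) :
    ∫ x, rexp x • g (rexp x) = ∫ ξ in Ioi 0, g ξ := by
  rw [← Real.range_exp, ← image_univ, integral_image_eq_integral_abs_deriv_smul
    MeasurableSet.univ (fun x _ => (Real.hasDerivAt_exp x).hasDerivWithinAt)
    Real.exp_injective.injOn, Measure.restrict_univ]
  simp_rw [abs_of_pos (Real.exp_pos _)]

lemma integrable_exp_smul_comp_exp_iff (g : ℝ → E) :
    Integrable (fun x => rexp x • g (rexp x)) ↔ IntegrableOn g (Ioi 0) := by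
  rw [← Real.range_exp, ← image_univ, integrableOn_image_iff_integrableOn_abs_deriv_smul
    MeasurableSet.univ (fun x _ => (Real.hasDerivAt_exp x).hasDerivWithinAt)
    Real.exp_injective.injOn, integrableOn_univ]
  simp_rw [abs_of_pos (Real.exp_pos _)]

end ChangeOfVariables

lemma tendsto_intervalIntegral_zero_of_norm_le {E ι : Type*} [NormedAddCommGroup E]
    [NormedSpace ℝ E] {l : Filter ι} {a b : ℝ}
    {F : ι → ℝ → E} {B : ι → ℝ} (hF : ∀ i, ∀ y ∈ [[a, b]], ‖F i y‖ ≤ B i)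
    (hB : Tendsto B l (𝓝 0)) :
    Tendsto (fun i => ∫ y in a..b, F i y) l (𝓝 0) := by
  refine squeeze_zero_norm (fun i => intervalIntegral.norm_integral_le_of_norm_le_const
    fun y hy => hF i y (uIoc_subset_uIcc hy)) ?_
  simpa using hB.mul_const |b - a|

lemma tendsto_exp_mul_exp_neg_mul_exp_cocompact {δ : ℝ} (hδ : 0 < δ) :
    Tendsto (fun x => rexp x * rexp (-δ * rexp x)) (cocompact ℝ) (𝓝 0) := by
  rw [cocompact_eq_atBot_atTop]
  refine tendsto_sup.2 ⟨?_, ?_⟩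
  · simpa [Function.comp_def] using ((by fun_prop : Continuous fun t => t * rexp (-δ * t)).tendsto
      0).comp Real.tendsto_exp_atBot
  · simpa [Function.comp_def] using
      (tendsto_rpow_mul_exp_neg_mul_atTop_nhds_zero 1 δ hδ).comp Real.tendsto_exp_atTop

theorem integral_add_mul_I_eq_of_differentiableOn_strip {E : Type*} [NormedAddCommGroup E]
    [NormedSpace ℂ E] {G : ℂ → E} {a b : ℝ}
    (hG : DifferentiableOn ℂ G (im ⁻¹' [[a, b]]))
    (ha : Integrable fun x : ℝ => G (x + a * I)) (hb : Integrable fun x : ℝ => G (x + b * I))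
    (htop : Tendsto (fun x : ℝ => ∫ y in a..b, G (x + y * I)) atTop (𝓝 0))
    (hbot : Tendsto (fun x : ℝ => ∫ y in a..b, G (x + y * I)) atBot (𝓝 0)) :
    ∫ x : ℝ, G (x + a * I) = ∫ x : ℝ, G (x + b * I) := by
  have hrect : ∀ R : ℝ, ((∫ x in -R..R, G (x + a * I)) - ∫ x in -R..R, G (x + b * I)) +
      I • (∫ y in a..b, G (R + y * I)) - I • (∫ y in a..b, G (-R + y * I)) = 0 := fun R => by
    simpa using integral_boundary_rect_eq_zero_of_differentiableOn G (-R + a * I) (R + b * I)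
      (hG.mono fun w hw => by simpa using (mem_reProdIm.1 hw).2)
  have hlim := (((intervalIntegral_tendsto_integral ha tendsto_neg_atTop_atBot tendsto_id).sub
    (intervalIntegral_tendsto_integral hb tendsto_neg_atTop_atBot tendsto_id)).add
    (htop.const_smul I)).sub ((hbot.comp tendsto_neg_atTop_atBot).const_smul I)
  simp only [smul_zero, add_zero, sub_zero] at hlim
  refine sub_eq_zero.1 (tendsto_nhds_unique hlim (tendsto_const_nhds.congr fun R => ?_))
  simpa only [Function.comp_def, id, ofReal_neg] using (hrect R).symm

/-- The form `f ζ dζ` pulled back to the ray `ζ = ξ * exp (i θ)`, `ξ > 0`. -/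
noncomputable def alongRay (f : ℂ → ℂ) (θ ξ : ℝ) : ℂ :=
  f (ξ * cexp (θ * I)) * cexp (θ * I)

lemma integral_ray_eq_laplaceTransform (f : ℂ → ℂ) (θ : ℝ) (z : ℂ) :
    ∫ ξ : ℝ in Ioi 0, cexp (-z * (ξ * cexp (θ * I))) * f (ξ * cexp (θ * I)) * cexp (θ * I) =
      laplaceTransform (alongRay f θ) (z * cexp (θ * I)) := by
  refine integral_congr_ae (Eventually.of_forall fun ξ => ?_)
  simp only [alongRay]
  ring_nf

section Sector

variable {f : ℂ → ℂ} {θ₁ θ₂ θ c A : ℝ}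

lemma ofReal_mul_cexp_mem_closedSector {ξ : ℝ} (hξ : 0 ≤ ξ) (hθ : θ ∈ Icc θ₁ θ₂) :
    (ξ : ℂ) * cexp (θ * I) ∈ closedSector θ₁ θ₂ :=
  ⟨ξ, θ, hξ, hθ.1, hθ.2, rfl⟩

lemma cexp_mem_closedSector {w : ℂ} (hw : w.im ∈ Icc θ₁ θ₂) : cexp w ∈ closedSector θ₁ θ₂ := by
  rw [← re_add_im w, exp_add, ← ofReal_exp]
  exact ofReal_mul_cexp_mem_closedSector (Real.exp_pos _).le hw

lemma aestronglyMeasurable_alongRay (hf : ContinuousOn f (closedSector θ₁ θ₂))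
    (hθ : θ ∈ Icc θ₁ θ₂) : AEStronglyMeasurable (alongRay f θ) (volume.restrict (Ioi 0)) := by
  refine ContinuousOn.aestronglyMeasurable ?_ measurableSet_Ioi
  exact (hf.comp (by fun_prop) fun ξ hξ => ofReal_mul_cexp_mem_closedSector
    (le_of_lt hξ) hθ).mul continuousOn_const

lemma norm_alongRay_le (hbd : ∀ ζ ∈ closedSector θ₁ θ₂, ‖f ζ‖ ≤ A * rexp (c * ‖ζ‖))
    (hθ : θ ∈ Icc θ₁ θ₂) {ξ : ℝ} (hξ : 0 ≤ ξ) : ‖alongRay f θ ξ‖ ≤ A * rexp (c * ξ) := by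
  have := hbd _ (ofReal_mul_cexp_mem_closedSector hξ hθ)
  rw [norm_mul, norm_exp_ofReal_mul_I, mul_one, norm_real, Real.norm_of_nonneg hξ] at this
  rwa [alongRay, norm_mul, norm_exp_ofReal_mul_I, mul_one]

lemma analyticOnNhd_laplaceTransform_alongRay (hf : ContinuousOn f (closedSector θ₁ θ₂))
    (hbd : ∀ ζ ∈ closedSector θ₁ θ₂, ‖f ζ‖ ≤ A * rexp (c * ‖ζ‖)) (hθ : θ ∈ Icc θ₁ θ₂) :
    AnalyticOnNhd ℂ (fun z => laplaceTransform (alongRay f θ) (z * cexp (θ * I)))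
      {z | c < (z * cexp (θ * I)).re} := by
  refine DifferentiableOn.analyticOnNhd ?_ (isOpen_lt continuous_const (by fun_prop))
  exact (differentiableOn_laplaceTransform (aestronglyMeasurable_alongRay hf hθ)
    fun ξ hξ => norm_alongRay_le hbd hθ (le_of_lt hξ)).comp (by fun_prop) fun z hz => hz

noncomputable def laplaceIntegrandCompExp (f : ℂ → ℂ) (z w : ℂ) : ℂ :=
  cexp (-z * cexp w) * f (cexp w) * cexp w

lemma laplaceIntegrandCompExp_add_mul_I (f : ℂ → ℂ) (z : ℂ) (x θ : ℝ) :
    laplaceIntegrandCompExp f z (x + θ * I) =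
      rexp x • (cexp (-(z * cexp (θ * I)) * rexp x) * alongRay f θ (rexp x)) := by
  simp only [laplaceIntegrandCompExp, alongRay, exp_add, ← ofReal_exp, real_smul]
  ring_nf

lemma integral_laplaceIntegrandCompExp (f : ℂ → ℂ) (z : ℂ) (θ : ℝ) :
    ∫ x : ℝ, laplaceIntegrandCompExp f z (x + θ * I) =
      laplaceTransform (alongRay f θ) (z * cexp (θ * I)) := by
  simp_rw [laplaceIntegrandCompExp_add_mul_I]
  exact integral_exp_smul_comp_exp fun ξ : ℝ => cexp (-(z * cexp (θ * I)) * ξ) * alongRay f θ ξ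

lemma integrable_laplaceIntegrandCompExp (hf : ContinuousOn f (closedSector θ₁ θ₂))
    (hbd : ∀ ζ ∈ closedSector θ₁ θ₂, ‖f ζ‖ ≤ A * rexp (c * ‖ζ‖)) (hθ : θ ∈ Icc θ₁ θ₂) {z : ℂ}
    (hz : c < (z * cexp (θ * I)).re) :
    Integrable fun x : ℝ => laplaceIntegrandCompExp f z (x + θ * I) := by
  simp_rw [laplaceIntegrandCompExp_add_mul_I]
  exact (integrable_exp_smul_comp_exp_iff _).2 (integrableOn_laplace_integrand_s4
    (aestronglyMeasurable_alongRay hf hθ) (fun ξ hξ => norm_alongRay_le hbd hθ (le_of_lt hξ)) hz)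

lemma norm_laplaceIntegrandCompExp_le
    (hbd : ∀ ζ ∈ closedSector θ₁ θ₂, ‖f ζ‖ ≤ A * rexp (c * ‖ζ‖)) (hθ : θ ∈ Icc θ₁ θ₂)
    (z : ℂ) (x : ℝ) :
    ‖laplaceIntegrandCompExp f z (x + θ * I)‖ ≤
      A * (rexp x * rexp (-((z * cexp (θ * I)).re - c) * rexp x)) := by
  rw [laplaceIntegrandCompExp_add_mul_I, norm_smul, Real.norm_of_nonneg (Real.exp_pos x).le,
    mul_left_comm]
  gcongr
  exact norm_laplace_integrand_le (norm_alongRay_le hbd hθ (Real.exp_pos x).le)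

lemma differentiableOn_laplaceIntegrandCompExp (hf : DifferentiableOn ℂ f (closedSector θ₁ θ₂))
    (z : ℂ) : DifferentiableOn ℂ (laplaceIntegrandCompExp f z) (im ⁻¹' Icc θ₁ θ₂) :=
  ((differentiable_exp.comp (differentiable_exp.const_mul (-z))).differentiableOn.mul
    (hf.comp differentiable_exp.differentiableOn fun _ => cexp_mem_closedSector)).mul
    differentiable_exp.differentiableOn

lemma exists_pos_forall_add_le_re_mul_cexp (h12 : θ₁ ≤ θ₂) {z : ℂ}
    (hz : ∀ θ ∈ Icc θ₁ θ₂, c < (z * cexp (θ * I)).re) :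
    ∃ δ > 0, ∀ θ ∈ Icc θ₁ θ₂, c + δ ≤ (z * cexp (θ * I)).re := by
  obtain ⟨θ₀, hθ₀, hmin⟩ := isCompact_Icc.exists_isMinOn (nonempty_Icc.2 h12)
    (f := fun θ : ℝ => (z * cexp (θ * I)).re) (by fun_prop)
  exact ⟨_, sub_pos.2 (hz θ₀ hθ₀), fun θ hθ => by linarith [isMinOn_iff.1 hmin θ hθ]⟩

theorem laplaceTransform_alongRay_eq (h12 : θ₁ ≤ θ₂)
    (hf : DifferentiableOn ℂ f (closedSector θ₁ θ₂))
    (hbd : ∀ ζ ∈ closedSector θ₁ θ₂, ‖f ζ‖ ≤ A * rexp (c * ‖ζ‖)) {z : ℂ}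
    (hz : ∀ θ ∈ Icc θ₁ θ₂, c < (z * cexp (θ * I)).re) :
    laplaceTransform (alongRay f θ₁) (z * cexp (θ₁ * I)) =
      laplaceTransform (alongRay f θ₂) (z * cexp (θ₂ * I)) := by
  obtain ⟨δ, hδ, hδz⟩ := exists_pos_forall_add_le_re_mul_cexp h12 hz
  have hA : 0 ≤ A := by
    simpa using (norm_nonneg _).trans (hbd _ (ofReal_mul_cexp_mem_closedSector le_rfl
      (left_mem_Icc.2 h12)))
  have hvert : ∀ x : ℝ, ∀ θ ∈ [[θ₁, θ₂]],
      ‖laplaceIntegrandCompExp f z (x + θ * I)‖ ≤ A * (rexp x * rexp (-δ * rexp x)) :=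
    fun x θ hθ => by
      rw [uIcc_of_le h12] at hθ
      refine (norm_laplaceIntegrandCompExp_le hbd hθ z x).trans ?_
      gcongr
      linarith [hδz θ hθ]
  have hdecay : Tendsto (fun x => A * (rexp x * rexp (-δ * rexp x))) (cocompact ℝ) (𝓝 0) := by
    simpa using (tendsto_exp_mul_exp_neg_mul_exp_cocompact hδ).const_mul A
  rw [← integral_laplaceIntegrandCompExp, ← integral_laplaceIntegrandCompExp]
  refine integral_add_mul_I_eq_of_differentiableOn_strip ?_
    (integrable_laplaceIntegrandCompExp hf.continuousOn hbd (left_mem_Icc.2 h12)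
      (hz θ₁ (left_mem_Icc.2 h12)))
    (integrable_laplaceIntegrandCompExp hf.continuousOn hbd (right_mem_Icc.2 h12)
      (hz θ₂ (right_mem_Icc.2 h12)))
    (tendsto_intervalIntegral_zero_of_norm_le hvert (hdecay.mono_left atTop_le_cocompact))
    (tendsto_intervalIntegral_zero_of_norm_le hvert (hdecay.mono_left atBot_le_cocompact))
  rw [uIcc_of_le h12]
  exact differentiableOn_laplaceIntegrandCompExp hf z

end Sector

/-- `z₀` is a large multiple of the direction `exp (-i (θ₁ + θ₂) / 2)`, so that `z₀ * exp (i θ)`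
stays in a sector of half-opening `(θ₂ - θ₁) / 2 < π / 2` around the positive axis. -/
lemma exists_forall_lt_re_mul_cexp_of_mem_ball {θ₁ θ₂ : ℝ} (hπ : θ₂ - θ₁ < π) (c : ℝ) :
    ∃ z₀ : ℂ, ∀ z ∈ Metric.ball z₀ 1, ∀ θ ∈ Icc θ₁ θ₂, c < (z * cexp (θ * I)).re := by
  set μ := (θ₁ + θ₂) / 2 with hμ
  set β := (θ₂ - θ₁) / 2 with hβ
  set z₀ : ℂ := ((|c| + 2) / Real.cos β : ℝ) * cexp (-μ * I)
  refine ⟨z₀, fun z hz θ hθ => ?_⟩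
  have hcos : 0 < Real.cos β :=
    Real.cos_pos_of_mem_Ioo ⟨by linarith [hθ.1, hθ.2, Real.pi_pos], by linarith⟩
  have hcos_le : Real.cos β ≤ Real.cos (θ - μ) := by
    rw [← Real.cos_abs (θ - μ)]
    exact Real.cos_le_cos_of_nonneg_of_le_pi (abs_nonneg _) (by linarith [hθ.1, hθ.2])
      (abs_le.2 ⟨by linarith [hθ.1], by linarith [hθ.2]⟩)
  have hz₀ : |c| + 2 ≤ (z₀ * cexp (θ * I)).re := by
    have : z₀ * cexp (θ * I) = ((|c| + 2) / Real.cos β : ℝ) * cexp ((θ - μ : ℝ) * I) := by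
      rw [mul_assoc, ← exp_add]; push_cast; ring_nf
    rw [this, re_ofReal_mul, exp_ofReal_mul_I_re, div_mul_eq_mul_div, le_div_iff₀ hcos]
    gcongr
  have hclose : |((z - z₀) * cexp (θ * I)).re| < 1 := (abs_re_le_norm _).trans_lt <| by
    rwa [norm_mul, norm_exp_ofReal_mul_I, mul_one, ← dist_eq_norm]
  rw [sub_mul, sub_re] at hclose
  linarith [(abs_lt.1 hclose).1, le_abs_self c]

lemma convex_halfSpace_re_mul_gt (c : ℝ) (u : ℂ) : Convex ℝ {z : ℂ | c < (z * u).re} :=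
  (convex_halfSpace_re_gt c).linear_preimage (LinearMap.mulRight ℝ u)

theorem stmt_4_general (θ₁ θ₂ c A : ℝ) (hθ : 0 < θ₂ - θ₁) (hθπ : θ₂ - θ₁ < Real.pi)
    (φhat : ℂ → ℂ) (U : Set ℂ) (hSU : closedSector θ₁ θ₂ ⊆ U)
    (hφ : DifferentiableOn ℂ φhat U)
    (hbd : ∀ ζ ∈ closedSector θ₁ θ₂, ‖φhat ζ‖ ≤ A * Real.exp (c * ‖ζ‖)) :
    {z : ℂ | c < (z * Complex.exp ((θ₁ : ℂ) * Complex.I)).re ∧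
        c < (z * Complex.exp ((θ₂ : ℂ) * Complex.I)).re}.Nonempty ∧
      ∀ z : ℂ, c < (z * Complex.exp ((θ₁ : ℂ) * Complex.I)).re →
        c < (z * Complex.exp ((θ₂ : ℂ) * Complex.I)).re →
        (∫ ξ in Set.Ioi (0:ℝ),
            Complex.exp (-z * ((ξ : ℂ) * Complex.exp ((θ₁ : ℂ) * Complex.I))) *
              φhat ((ξ : ℂ) * Complex.exp ((θ₁ : ℂ) * Complex.I)) *
              Complex.exp ((θ₁ : ℂ) * Complex.I)) =
          ∫ ξ in Set.Ioi (0:ℝ),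
            Complex.exp (-z * ((ξ : ℂ) * Complex.exp ((θ₂ : ℂ) * Complex.I))) *
              φhat ((ξ : ℂ) * Complex.exp ((θ₂ : ℂ) * Complex.I)) *
              Complex.exp ((θ₂ : ℂ) * Complex.I) := by
  have h12 : θ₁ ≤ θ₂ := by linarith
  have hφS := hφ.mono hSU
  obtain ⟨z₀, hz₀⟩ := exists_forall_lt_re_mul_cexp_of_mem_ball hθπ c
  have hz₀S := hz₀ z₀ (Metric.mem_ball_self one_pos)
  refine ⟨⟨z₀, hz₀S θ₁ (left_mem_Icc.2 h12), hz₀S θ₂ (right_mem_Icc.2 h12)⟩, fun z hz₁ hz₂ => ?_⟩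
  rw [integral_ray_eq_laplaceTransform, integral_ray_eq_laplaceTransform]
  set S := {z : ℂ | c < (z * cexp (θ₁ * I)).re} ∩ {z : ℂ | c < (z * cexp (θ₂ * I)).re}
  have hS : IsPreconnected S :=
    ((convex_halfSpace_re_mul_gt c _).inter (convex_halfSpace_re_mul_gt c _)).isPreconnected
  have hF₁ : AnalyticOnNhd ℂ _ S := (analyticOnNhd_laplaceTransform_alongRay hφS.continuousOn
    hbd (left_mem_Icc.2 h12)).mono inter_subset_left
  have hF₂ : AnalyticOnNhd ℂ _ S := (analyticOnNhd_laplaceTransform_alongRay hφS.continuousOn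
    hbd (right_mem_Icc.2 h12)).mono inter_subset_right
  refine hF₁.eqOn_of_preconnected_of_eventuallyEq hF₂ hS
    ⟨hz₀S θ₁ (left_mem_Icc.2 h12), hz₀S θ₂ (right_mem_Icc.2 h12)⟩ ?_ ⟨hz₁, hz₂⟩
  filter_upwards [Metric.ball_mem_nhds z₀ one_pos] with z hz
  exact laplaceTransform_alongRay_eq h12 hφS hbd (hz₀ z hz)

/-- Laplace transforms in two directions at angular distance less than `π` of a function
holomorphic with exponential growth on the corresponding closed sector coincide on the
(nonempty) intersection of their half-planes of convergence. -/
theorem stmt_4 (θ₁ θ₂ c A : ℝ) (hθ : 0 < θ₂ - θ₁) (hθπ : θ₂ - θ₁ < Real.pi) (hA : 0 < A)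
    (φhat : ℂ → ℂ) (U : Set ℂ) (hU : IsOpen U) (hSU : closedSector θ₁ θ₂ ⊆ U)
    (hφ : DifferentiableOn ℂ φhat U)
    (hbd : ∀ ζ ∈ closedSector θ₁ θ₂, ‖φhat ζ‖ ≤ A * Real.exp (c * ‖ζ‖)) :
    {z : ℂ | c < (z * Complex.exp ((θ₁ : ℂ) * Complex.I)).re ∧
        c < (z * Complex.exp ((θ₂ : ℂ) * Complex.I)).re}.Nonempty ∧
      ∀ z : ℂ, c < (z * Complex.exp ((θ₁ : ℂ) * Complex.I)).re →
        c < (z * Complex.exp ((θ₂ : ℂ) * Complex.I)).re →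
        (∫ ξ in Set.Ioi (0:ℝ),
            Complex.exp (-z * ((ξ : ℂ) * Complex.exp ((θ₁ : ℂ) * Complex.I))) *
              φhat ((ξ : ℂ) * Complex.exp ((θ₁ : ℂ) * Complex.I)) *
              Complex.exp ((θ₁ : ℂ) * Complex.I)) =
          ∫ ξ in Set.Ioi (0:ℝ),
            Complex.exp (-z * ((ξ : ℂ) * Complex.exp ((θ₂ : ℂ) * Complex.I))) *
              φhat ((ξ : ℂ) * Complex.exp ((θ₂ : ℂ) * Complex.I)) *
              Complex.exp ((θ₂ : ℂ) * Complex.I) :=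
  stmt_4_general θ₁ θ₂ c A hθ hθπ φhat U hSU hφ hbd
end

section
/- Let (a_n) be a sequence of complex numbers and A, c > 0 with |a_n| ≤ A·c^n for all n, so that F(ζ) := Σ_{n≥0} a_n ζ^n/n! defines an entire function. Then for every θ ∈ ℝ and every z ∈ ℂ with Re(z·e^{iθ}) > c, the integral ∫₀^{+∞} e^{−z·ξe^{iθ}} F(ξe^{iθ}) e^{iθ} dξ converges and equals the sum of the convergent series Σ_{n≥0} a_n z^{−n−1}. -/
/-!
Put `e = e^{iθ}` and `w = z e`. Substituting `ζ = ξ e` turns the integral into the Laplace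
transform, along the positive real axis at `w`, of the Borel transform of the rotated
coefficients `aₙ eⁿ`. The moments `∫₀^∞ ξⁿ e^{-wξ} dξ = n!/w^{n+1}` turn the termwise integrals
into `aₙ eⁿ / w^{n+1}`, and `|aₙ| ≤ A cⁿ` with `c < Re w` makes the integrals of the norms a
convergent geometric series, so the series may be integrated term by term.
-/

open MeasureTheory Set Filter Topology Complex
open scoped Nat

section Moments

variable {w : ℂ}

lemma norm_ofReal_pow_mul_cexp_neg_mul (w : ℂ) (n : ℕ) {ξ : ℝ} (hξ : 0 ≤ ξ) :
    ‖(ξ : ℂ) ^ n * cexp (-w * ξ)‖ = ξ ^ n * Real.exp (-w.re * ξ) := by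
  rw [norm_mul, norm_pow, norm_real, Real.norm_of_nonneg hξ, norm_exp]
  simp

lemma integrableOn_pow_mul_exp_neg_mul_Ioi {r : ℝ} (hr : 0 < r) (n : ℕ) :
    IntegrableOn (fun ξ : ℝ => ξ ^ n * Real.exp (-r * ξ)) (Ioi 0) := by
  refine (integrableOn_rpow_mul_exp_neg_mul_rpow (s := n) (p := 1)
    (neg_one_lt_zero.trans_le n.cast_nonneg) one_pos hr).congr_fun (fun ξ _ => ?_) measurableSet_Ioi
  simp [Real.rpow_natCast]

lemma integrableOn_ofReal_pow_mul_cexp_neg_mul_Ioi (hw : 0 < w.re) (n : ℕ) :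
    IntegrableOn (fun ξ : ℝ => (ξ : ℂ) ^ n * cexp (-w * ξ)) (Ioi 0) := by
  refine (integrableOn_pow_mul_exp_neg_mul_Ioi hw n).mono' (by fun_prop) ?_
  filter_upwards [self_mem_ae_restrict measurableSet_Ioi] with ξ hξ
  exact (norm_ofReal_pow_mul_cexp_neg_mul w n (le_of_lt hξ)).le

lemma tendsto_ofReal_pow_mul_cexp_neg_mul_atTop (hw : 0 < w.re) (n : ℕ) :
    Tendsto (fun ξ : ℝ => (ξ : ℂ) ^ n * cexp (-w * ξ)) atTop (𝓝 0) := by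
  rw [tendsto_zero_iff_norm_tendsto_zero]
  refine (tendsto_rpow_mul_exp_neg_mul_atTop_nhds_zero n w.re hw).congr' ?_
  filter_upwards [eventually_ge_atTop 0] with ξ hξ
  rw [norm_ofReal_pow_mul_cexp_neg_mul w n hξ, Real.rpow_natCast]

/-- Integration by parts: `-ξ^(n+1) e^{-wξ} / w` is an antiderivative of the difference. -/
lemma integral_ofReal_pow_succ_mul_cexp_neg_mul_Ioi (hw : 0 < w.re) (n : ℕ) :
    ∫ ξ in Ioi (0 : ℝ), (ξ : ℂ) ^ (n + 1) * cexp (-w * ξ) =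
      (n + 1) / w * ∫ ξ in Ioi (0 : ℝ), (ξ : ℂ) ^ n * cexp (-w * ξ) := by
  have hw0 : w ≠ 0 := by rintro rfl; simp at hw
  have hderiv : ∀ x ∈ Ici (0 : ℝ),
      HasDerivAt (fun ξ : ℝ => -((ξ : ℂ) ^ (n + 1) * cexp (-w * ξ)) / w)
      ((x : ℂ) ^ (n + 1) * cexp (-w * x) - (n + 1) / w * ((x : ℂ) ^ n * cexp (-w * x))) x := by
    intro x _
    have h := ((hasDerivAt_pow (n + 1) (x : ℂ)).mul
      ((hasDerivAt_id' (x : ℂ)).const_mul (-w)).cexp).neg.div_const w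
    refine (h.congr_deriv ?_).comp_ofReal
    push_cast
    field_simp
    ring
  have hint := integrableOn_ofReal_pow_mul_cexp_neg_mul_Ioi hw
  have h := integral_Ioi_of_hasDerivAt_of_tendsto' hderiv
    ((hint (n + 1)).sub ((hint n).const_mul _))
    (by simpa using ((tendsto_ofReal_pow_mul_cexp_neg_mul_atTop hw (n + 1)).neg.div_const w))
  rw [integral_sub (hint (n + 1)) ((hint n).const_mul _), integral_const_mul] at h
  simpa [sub_eq_zero] using h

lemma integral_ofReal_pow_mul_cexp_neg_mul_Ioi (hw : 0 < w.re) (n : ℕ) :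
    ∫ ξ in Ioi (0 : ℝ), (ξ : ℂ) ^ n * cexp (-w * ξ) = n ! / w ^ (n + 1) := by
  have hw0 : w ≠ 0 := by rintro rfl; simp at hw
  induction n with
  | zero => simpa using integral_exp_mul_complex_Ioi (a := -w) (by simpa using hw) 0
  | succ n ih =>
    rw [integral_ofReal_pow_succ_mul_cexp_neg_mul_Ioi hw, ih, Nat.factorial_succ]
    push_cast
    field_simp
    ring

lemma integral_pow_mul_exp_neg_mul_Ioi {r : ℝ} (hr : 0 < r) (n : ℕ) :
    ∫ ξ in Ioi (0 : ℝ), ξ ^ n * Real.exp (-r * ξ) = n ! / r ^ (n + 1) := by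
  have h := integral_ofReal_pow_mul_cexp_neg_mul_Ioi (w := r) (by simpa using hr) n
  apply ofReal_injective
  rw [← integral_complex_ofReal]
  push_cast
  exact h

end Moments

/-- The Borel transform of the formal series `Σ bₙ z^{-n-1}`. -/
noncomputable def borelTransform (b : ℕ → ℂ) (ζ : ℂ) : ℂ :=
  ∑' n, b n * ζ ^ n / n !

section BorelLaplace

variable {b : ℕ → ℂ} {A c : ℝ}

lemma norm_borel_term_le (hb : ∀ n, ‖b n‖ ≤ A * c ^ n) (n : ℕ) (ζ : ℂ) :
    ‖b n * ζ ^ n / (n ! : ℂ)‖ ≤ A * ((c * ‖ζ‖) ^ n / n !) := by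
  rw [norm_div, norm_mul, norm_pow, norm_natCast, mul_pow, ← mul_div_assoc, ← mul_assoc]
  gcongr
  exact hb n

lemma summable_borel_term (hb : ∀ n, ‖b n‖ ≤ A * c ^ n) (ζ : ℂ) :
    Summable fun n => b n * ζ ^ n / n ! :=
  .of_norm_bounded ((Real.summable_pow_div_factorial _).mul_left A) (norm_borel_term_le hb · ζ)

lemma norm_borelTransform_le (hb : ∀ n, ‖b n‖ ≤ A * c ^ n) (ζ : ℂ) :
    ‖borelTransform b ζ‖ ≤ A * Real.exp (c * ‖ζ‖) := by
  rw [Real.exp_eq_exp_ℝ, NormedSpace.exp_eq_tsum_div, ← tsum_mul_left]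
  exact tsum_of_norm_bounded ((Real.summable_pow_div_factorial _).mul_left A).hasSum
    (norm_borel_term_le hb · ζ)

lemma measurable_borelTransform (hb : ∀ n, ‖b n‖ ≤ A * c ^ n) :
    Measurable (borelTransform b) :=
  measurable_of_tendsto_metrizable (fun N => by fun_prop)
    (tendsto_pi_nhds.2 fun ζ => (summable_borel_term hb ζ).hasSum.tendsto_sum_nat)

lemma integrableOn_cexp_neg_mul_mul_borelTransform (hb : ∀ n, ‖b n‖ ≤ A * c ^ n) {w : ℂ}
    (hw : c < w.re) :
    IntegrableOn (fun ξ : ℝ => cexp (-w * ξ) * borelTransform b ξ) (Ioi 0) := by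
  have hmeas : Measurable fun ξ : ℝ => cexp (-w * ξ) * borelTransform b ξ :=
    (by fun_prop : Measurable fun ξ : ℝ => cexp (-w * ξ)).mul
      ((measurable_borelTransform hb).comp measurable_ofReal)
  refine ((exp_neg_integrableOn_Ioi 0 (sub_pos.2 hw)).const_mul A).mono'
    hmeas.aestronglyMeasurable ?_
  filter_upwards [self_mem_ae_restrict measurableSet_Ioi] with ξ hξ
  calc ‖cexp (-w * ξ) * borelTransform b ξ‖
      ≤ Real.exp (-w.re * ξ) * (A * Real.exp (c * ξ)) := by
        rw [norm_mul, norm_exp]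
        simpa [Real.norm_of_nonneg hξ.le] using
          mul_le_mul_of_nonneg_left (norm_borelTransform_le hb ξ) (Real.exp_nonneg _)
    _ = A * Real.exp (-(w.re - c) * ξ) := by
        rw [mul_left_comm, ← Real.exp_add]
        ring_nf

theorem hasSum_integral_cexp_neg_mul_mul_borelTransform (hb : ∀ n, ‖b n‖ ≤ A * c ^ n)
    (hc : 0 ≤ c) {w : ℂ} (hw : c < w.re) :
    HasSum (fun n => b n / w ^ (n + 1))
      (∫ ξ in Ioi (0 : ℝ), cexp (-w * ξ) * borelTransform b ξ) := by
  have hr : 0 < w.re := hc.trans_lt hw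
  have hw0 : w ≠ 0 := by rintro rfl; simp at hr
  set T : ℕ → ℝ → ℂ := fun n ξ => b n / n ! * ((ξ : ℂ) ^ n * cexp (-w * ξ))
  have hT_int (n : ℕ) : IntegrableOn (T n) (Ioi 0) :=
    (integrableOn_ofReal_pow_mul_cexp_neg_mul_Ioi hr n).const_mul _
  have hT_integral (n : ℕ) : ∫ ξ in Ioi (0 : ℝ), T n ξ = b n / w ^ (n + 1) := by
    rw [integral_const_mul, integral_ofReal_pow_mul_cexp_neg_mul_Ioi hr]
    field_simp [Nat.cast_ne_zero.2 n.factorial_ne_zero]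
  have hT_integral_norm (n : ℕ) : ∫ ξ in Ioi (0 : ℝ), ‖T n ξ‖ = ‖b n‖ / w.re ^ (n + 1) := by
    rw [setIntegral_congr_fun measurableSet_Ioi fun ξ hξ => by
      rw [norm_mul, norm_ofReal_pow_mul_cexp_neg_mul w n (le_of_lt hξ)]]
    rw [integral_const_mul, integral_pow_mul_exp_neg_mul_Ioi hr, norm_div, Complex.norm_natCast]
    field_simp
  have hsum : Summable fun n => ∫ ξ in Ioi (0 : ℝ), ‖T n ξ‖ := by
    simp_rw [hT_integral_norm]
    refine ((summable_geometric_of_lt_one (div_nonneg hc hr.le)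
      ((div_lt_one hr).2 hw)).mul_left (A / w.re)).of_nonneg_of_le (fun n => by positivity)
      fun n => ?_
    rw [div_pow, div_mul_div_comm, pow_succ']
    gcongr
    exact hb n
  have hT_tsum (ξ : ℝ) : ∑' n, T n ξ = cexp (-w * ξ) * borelTransform b ξ := by
    rw [borelTransform, ← tsum_mul_left]
    congr 1 with n
    ring
  simpa only [hT_integral, hT_tsum] using hasSum_integral_of_summable_integral_norm hT_int hsum

end BorelLaplace

theorem stmt_5_general (a : ℕ → ℂ) (A c : ℝ) (hc : 0 < c)
    (hbd : ∀ n : ℕ, ‖a n‖ ≤ A * c ^ n) (θ : ℝ) (z : ℂ)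
    (hz : c < (z * Complex.exp ((θ : ℂ) * Complex.I)).re) :
    IntegrableOn
        (fun ξ : ℝ => Complex.exp (-z * ((ξ : ℂ) * Complex.exp ((θ : ℂ) * Complex.I))) *
          (∑' n : ℕ, a n * ((ξ : ℂ) * Complex.exp ((θ : ℂ) * Complex.I)) ^ n /
            (Nat.factorial n : ℂ)) * Complex.exp ((θ : ℂ) * Complex.I))
        (Set.Ioi (0:ℝ)) ∧
      Summable (fun n : ℕ => a n / z ^ (n + 1)) ∧
      (∫ ξ in Set.Ioi (0:ℝ),
          Complex.exp (-z * ((ξ : ℂ) * Complex.exp ((θ : ℂ) * Complex.I))) *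
            (∑' n : ℕ, a n * ((ξ : ℂ) * Complex.exp ((θ : ℂ) * Complex.I)) ^ n /
              (Nat.factorial n : ℂ)) * Complex.exp ((θ : ℂ) * Complex.I)) =
        ∑' n : ℕ, a n / z ^ (n + 1) := by
  set e := cexp (θ * I)
  have he : ‖e‖ = 1 := by simp [e, norm_exp]
  have he0 : e ≠ 0 := exp_ne_zero _
  have hb (n : ℕ) : ‖a n * e ^ n‖ ≤ A * c ^ n := by simpa [he] using hbd n
  have hintegrand : (fun ξ : ℝ => cexp (-z * (ξ * e)) * (∑' n, a n * (ξ * e) ^ n / n !) * e) =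
      fun ξ : ℝ => cexp (-(z * e) * ξ) * borelTransform (fun n => a n * e ^ n) ξ * e := by
    ext ξ
    simp only [borelTransform, mul_pow, neg_mul, mul_assoc, mul_comm (e ^ _)]
    ring_nf
  have hz0 : z ≠ 0 := by rintro rfl; simp at hz; linarith
  have hterm (n : ℕ) : a n * e ^ n / (z * e) ^ (n + 1) * e = a n / z ^ (n + 1) := by
    field_simp
    ring
  have hsum := (hasSum_integral_cexp_neg_mul_mul_borelTransform hb hc.le hz).mul_right e
  simp only [hterm] at hsum
  rw [hintegrand, integral_mul_const]
  exact ⟨(integrableOn_cexp_neg_mul_mul_borelTransform hb hz).mul_const e, hsum.summable,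
    hsum.tsum_eq.symm⟩

/-- The Borel sum of a convergent formal series coincides with its ordinary sum: if
`|aₙ| ≤ A cⁿ` and `F` is the entire function `Σ aₙ ζⁿ/n!`, then for any direction `θ`
and any `z` with `Re(z e^{iθ}) > c`, the Laplace integral of `F` in the direction `θ`
converges and equals `Σ aₙ z^{-n-1}`. -/
theorem stmt_5 (a : ℕ → ℂ) (A c : ℝ) (hA : 0 < A) (hc : 0 < c)
    (hbd : ∀ n : ℕ, ‖a n‖ ≤ A * c ^ n) (θ : ℝ) (z : ℂ)
    (hz : c < (z * Complex.exp ((θ : ℂ) * Complex.I)).re) :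
    IntegrableOn
        (fun ξ : ℝ => Complex.exp (-z * ((ξ : ℂ) * Complex.exp ((θ : ℂ) * Complex.I))) *
          (∑' n : ℕ, a n * ((ξ : ℂ) * Complex.exp ((θ : ℂ) * Complex.I)) ^ n /
            (Nat.factorial n : ℂ)) * Complex.exp ((θ : ℂ) * Complex.I))
        (Set.Ioi (0:ℝ)) ∧
      Summable (fun n : ℕ => a n / z ^ (n + 1)) ∧
      (∫ ξ in Set.Ioi (0:ℝ),
          Complex.exp (-z * ((ξ : ℂ) * Complex.exp ((θ : ℂ) * Complex.I))) *
            (∑' n : ℕ, a n * ((ξ : ℂ) * Complex.exp ((θ : ℂ) * Complex.I)) ^ n /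
              (Nat.factorial n : ℂ)) * Complex.exp ((θ : ℂ) * Complex.I)) =
        ∑' n : ℕ, a n / z ^ (n + 1) :=
  stmt_5_general a A c hc hbd θ z hz
end

section
/- One has (x/(2π))^{1/2}·x^{−x}·e^x·Γ(x) → 1 as x → +∞, where Γ(x) = ∫₀^{+∞} t^{x−1} e^{−t} dt is Euler's Gamma function on (0,+∞) and x^{−x} = e^{−x·log x}. -/
/-!
With `μ = stirlingRemainder`, the expression is `exp (μ x)`, so the claim is `μ x → 0`.
Along the integers this is Stirling's formula for `n!`, since `Γ(n + 1) = n!`. For `x = n + t`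
with `0 ≤ t ≤ 1`, log-convexity of `Γ` traps `log Γ(n + t)` between `log Γ(n) + t log (n - 1)`
and `log Γ(n) + t log n`, and the elementary bounds `t / (n + t) ≤ log (n + t) - log n ≤ t / n`
then give `|μ (n + t) - μ n| ≤ 2 / (n - 1)`.
-/

open Filter Real Topology

namespace Real

lemma sub_div_le_log_sub_log {a b : ℝ} (ha : 0 < a) (hb : 0 < b) :
    (b - a) / b ≤ log b - log a := by
  have := one_sub_inv_le_log_of_pos (div_pos hb ha)
  rwa [log_div hb.ne' ha.ne', inv_div, one_sub_div hb.ne'] at this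

lemma log_sub_log_le_sub_div {a b : ℝ} (ha : 0 < a) (hb : 0 < b) :
    log b - log a ≤ (b - a) / a := by
  have := log_le_sub_one_of_pos (div_pos hb ha)
  rwa [log_div hb.ne' ha.ne', div_sub_one ha.ne'] at this

lemma log_Gamma_add_one {y : ℝ} (hy : 0 < y) :
    log (Gamma (y + 1)) = log (Gamma y) + log y := by
  rw [Gamma_add_one hy.ne', log_mul hy.ne' (Gamma_pos_of_pos hy).ne', add_comm]

lemma log_Gamma_nat_add_le {n : ℕ} (hn : n ≠ 0) {t : ℝ} (ht₀ : 0 ≤ t) (ht₁ : t ≤ 1) :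
    log (Gamma (n + t)) ≤ log (Gamma n) + t * log n := by
  rcases ht₀.eq_or_lt with rfl | ht
  · simp
  exact BohrMollerup.f_add_nat_le convexOn_log_Gamma log_Gamma_add_one hn ht ht₁

lemma log_Gamma_nat_add_ge {n : ℕ} (hn : 2 ≤ n) {t : ℝ} (ht : 0 ≤ t) :
    log (Gamma n) + t * log (n - 1) ≤ log (Gamma (n + t)) := by
  rcases ht.eq_or_lt with rfl | ht
  · simp
  exact BohrMollerup.f_add_nat_ge convexOn_log_Gamma log_Gamma_add_one hn ht

noncomputable def stirlingRemainder (x : ℝ) : ℝ :=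
  log (Gamma x) - ((x - 1 / 2) * log x - x + log (2 * π) / 2)

lemma stirlingRemainder_natCast {n : ℕ} (hn : n ≠ 0) :
    stirlingRemainder n = log (Stirling.stirlingSeq n) - log √π := by
  have hn₀ : (0 : ℝ) < n := by positivity
  have hfact : log (n.factorial : ℝ) = log (Gamma n) + log n := by
    rw [← Gamma_nat_eq_factorial, log_Gamma_add_one hn₀]
  rw [stirlingRemainder, Stirling.log_stirlingSeq_formula, hfact, log_sqrt pi_pos.le,
    log_mul two_ne_zero hn₀.ne', log_mul two_ne_zero pi_ne_zero,
    log_div hn₀.ne' (exp_pos 1).ne', log_exp]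
  ring

lemma tendsto_stirlingRemainder_natCast :
    Tendsto (fun n : ℕ ↦ stirlingRemainder n) atTop (𝓝 0) := by
  have h := (Stirling.tendsto_stirlingSeq_sqrt_pi.log (by positivity)).sub_const (log √π)
  rw [sub_self] at h
  refine h.congr' ?_
  filter_upwards [eventually_ne_atTop 0] with n hn
  exact (stirlingRemainder_natCast hn).symm

lemma abs_sub_mul_log_add_sub_log_le {a t : ℝ} (ha : 1 / 2 ≤ a) (ht₀ : 0 ≤ t) (ht₁ : t ≤ 1) :
    |t - (a + t - 1 / 2) * (log (a + t) - log a)| ≤ 1 / a := by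
  have ha₀ : 0 < a := by linarith
  have hat : 0 < a + t := by linarith
  have hlog_ge := sub_div_le_log_sub_log ha₀ hat
  have hlog_le := log_sub_log_le_sub_div ha₀ hat
  rw [add_sub_cancel_left] at hlog_ge hlog_le
  have hc : 0 ≤ a + t - 1 / 2 := by linarith
  rw [abs_le]
  constructor
  · calc -(1 / a) ≤ t * (1 / 2 - t) / a := by
          rw [← neg_div, div_le_div_iff_of_pos_right ha₀]; nlinarith
      _ = t - (a + t - 1 / 2) * (t / a) := by field_simp; ring
      _ ≤ _ := by gcongr
  · calc t - (a + t - 1 / 2) * (log (a + t) - log a)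
        ≤ t - (a + t - 1 / 2) * (t / (a + t)) := by gcongr
      _ = t / (2 * (a + t)) := by field_simp; ring
      _ ≤ 1 / a := by rw [div_le_div_iff₀ (by positivity) ha₀]; nlinarith

lemma log_Gamma_nat_add_sub_bounds {n : ℕ} (hn : 2 ≤ n) {t : ℝ} (ht₀ : 0 ≤ t) (ht₁ : t ≤ 1) :
    -(1 / (n - 1)) ≤ log (Gamma (n + t)) - log (Gamma n) - t * log n ∧
      log (Gamma (n + t)) - log (Gamma n) - t * log n ≤ 0 := by
  have hn₁ : (1 : ℝ) < n := by exact_mod_cast hn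
  have hlog : log n - log (n - 1) ≤ 1 / (n - 1) := by
    simpa using log_sub_log_le_sub_div (a := (n : ℝ) - 1) (b := n) (by linarith) (by linarith)
  have hlog₀ : 0 ≤ log n - log (n - 1) := sub_nonneg.mpr (log_le_log (by linarith) (by linarith))
  have hchord : t * (log n - log (n - 1)) ≤ 1 / (n - 1) := by nlinarith
  have hge := log_Gamma_nat_add_ge hn ht₀
  have hle := log_Gamma_nat_add_le (n := n) (by omega) ht₀ ht₁
  constructor <;> linarith

lemma abs_stirlingRemainder_nat_add_sub_le {n : ℕ} (hn : 2 ≤ n) {t : ℝ} (ht₀ : 0 ≤ t)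
    (ht₁ : t ≤ 1) : |stirlingRemainder (n + t) - stirlingRemainder n| ≤ 2 / (n - 1) := by
  have hn₁ : (1 : ℝ) < n := by exact_mod_cast hn
  have hsplit : stirlingRemainder (n + t) - stirlingRemainder n =
      (log (Gamma (n + t)) - log (Gamma n) - t * log n) +
        (t - (n + t - 1 / 2) * (log (n + t) - log n)) := by
    unfold stirlingRemainder; ring
  obtain ⟨hΓ₁, hΓ₂⟩ := log_Gamma_nat_add_sub_bounds hn ht₀ ht₁
  have hsmooth := abs_le.mp (abs_sub_mul_log_add_sub_log_le (a := n) (by linarith) ht₀ ht₁)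
  have hn_inv : 1 / (n : ℝ) ≤ 1 / (n - 1) := one_div_le_one_div_of_le (by linarith) (by linarith)
  rw [hsplit, abs_le]
  have htwo : 2 / ((n : ℝ) - 1) = 1 / (n - 1) + 1 / (n - 1) := by ring
  constructor <;> linarith [hsmooth.1, hsmooth.2]

lemma tendsto_stirlingRemainder : Tendsto stirlingRemainder atTop (𝓝 0) := by
  have hfloor : Tendsto (fun x : ℝ ↦ stirlingRemainder ⌊x⌋₊) atTop (𝓝 0) :=
    tendsto_stirlingRemainder_natCast.comp tendsto_nat_floor_atTop
  have hbound : Tendsto (fun x : ℝ ↦ 2 / ((⌊x⌋₊ : ℝ) - 1)) atTop (𝓝 0) :=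
    (tendsto_const_nhds.div_atTop (tendsto_atTop_add_const_right _ (-1)
      tendsto_natCast_atTop_atTop)).comp tendsto_nat_floor_atTop
  have hdiff : Tendsto (fun x ↦ stirlingRemainder x - stirlingRemainder ⌊x⌋₊) atTop (𝓝 0) := by
    refine squeeze_zero_norm' ?_ hbound
    filter_upwards [eventually_ge_atTop 2] with x hx
    have hn : 2 ≤ ⌊x⌋₊ := Nat.le_floor (by exact_mod_cast hx)
    have hfract₀ : 0 ≤ x - ⌊x⌋₊ := sub_nonneg.mpr (Nat.floor_le (by linarith))
    have hfract₁ : x - ⌊x⌋₊ ≤ 1 := by linarith [Nat.lt_floor_add_one x]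
    simpa using abs_stirlingRemainder_nat_add_sub_le hn hfract₀ hfract₁
  simpa using hdiff.add hfloor

lemma exp_stirlingRemainder {x : ℝ} (hx : 0 < x) :
    exp (stirlingRemainder x) = √(x / (2 * π)) * exp (-x * log x) * exp x * Gamma x := by
  have hq : 0 < x / (2 * π) := by positivity
  have hsqrt : √(x / (2 * π)) = exp (log (x / (2 * π)) / 2) := by
    rw [← log_sqrt hq.le, exp_log (sqrt_pos.mpr hq)]
  rw [hsqrt, ← exp_log (Gamma_pos_of_pos hx), ← exp_add, ← exp_add, ← exp_add,
    stirlingRemainder, log_div hx.ne' (by positivity)]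
  congr 1
  ring

end Real

/-- Stirling's formula for the real Gamma function:
`(x/(2π))^{1/2} · x^{-x} · e^x · Γ(x) → 1` as `x → +∞`, with `x^{-x} = e^{-x log x}`. -/
theorem stmt_6 :
    Filter.Tendsto
      (fun x : ℝ => Real.sqrt (x / (2 * Real.pi)) * Real.exp (-x * Real.log x) *
        Real.exp x * Real.Gamma x)
      Filter.atTop (nhds 1) := by
  have h := (continuous_exp.tendsto 0).comp tendsto_stirlingRemainder
  rw [exp_zero] at h
  refine h.congr' ?_
  filter_upwards [eventually_gt_atTop 0] with x hx
  exact exp_stirlingRemainder hx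
end

section
/- Let w ∈ ℂ with 0 < |w| < 1 and define φ^P(z) := Σ_{k≥0} w^k/(z+k), which converges for every z ∈ ℂ∖{0,−1,−2,…}. Then φ^P(z) − w·φ^P(z+1) = 1/z for all z ∈ ℂ∖{0,−1,−2,…}. Moreover, for every z₀ ∈ ℂ∖(−∞,0] and every bounded function ψ defined on the half-line z₀ + ℝ≥0 satisfying ψ(z) − w·ψ(z+1) = 1/z for all z ∈ z₀ + ℝ≥0, one has ψ(z) = φ^P(z) for all z ∈ z₀ + ℝ≥0. -/
/-!
The shifted series `w * φ^P(z + 1)` is `φ^P(z)` without its `k = 0` term `1/z`, which gives the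
difference equation. For uniqueness, the difference `δ` of two bounded solutions satisfies
`δ(z) = w * δ(z + 1)`, hence `δ(z) = wⁿ δ(z + n)` and `‖δ(z)‖ ≤ ‖w‖ⁿ * sup ‖δ‖ → 0`. The series
itself is bounded on a half-line `z₀ + ℝ≥0` with `z₀ ∉ (−∞, 0]` because that half-line keeps a
positive distance from `0`, so that all denominators `z + k` are bounded away from `0`.
-/

open Filter Complex Topology

noncomputable def poincareSeries (w z : ℂ) : ℂ := ∑' k : ℕ, w ^ k / (z + k)

theorem eq_zero_of_bounded_of_eq_smul_succ {𝕜 E : Type*} [NormedField 𝕜]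
    [NormedAddCommGroup E] [NormedSpace 𝕜 E] {w : 𝕜} (hw : ‖w‖ < 1) {u : ℕ → E}
    (hb : ∃ C, ∀ n, ‖u n‖ ≤ C) (hu : ∀ n, u n = w • u (n + 1)) : u 0 = 0 := by
  obtain ⟨C, hC⟩ := hb
  have hpow : ∀ n, u 0 = w ^ n • u n := by
    intro n
    induction n with
    | zero => simp
    | succ n ih => rw [ih, hu n, smul_smul, pow_succ]
  have hlim : Tendsto (fun n : ℕ => ‖w‖ ^ n * C) atTop (𝓝 0) := by
    simpa using (tendsto_pow_atTop_nhds_zero_of_lt_one (norm_nonneg w) hw).mul_const C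
  refine norm_le_zero_iff.1 (ge_of_tendsto' hlim fun n => ?_)
  rw [hpow n, norm_smul, norm_pow]
  exact mul_le_mul_of_nonneg_left (hC n) (by positivity)

theorem summable_pow_div_add_natCast {w : ℂ} (hw : ‖w‖ < 1) (z : ℂ) :
    Summable fun k : ℕ => w ^ k / (z + k) := by
  refine Summable.of_norm_bounded_eventually_nat
    (summable_geometric_of_lt_one (norm_nonneg w) hw) ?_
  filter_upwards [tendsto_natCast_atTop_atTop.eventually_ge_atTop (‖z‖ + 1)] with k hk
  have hone : 1 ≤ ‖z + k‖ := by
    have := norm_sub_norm_le (k : ℂ) (-z)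
    rw [norm_neg, Complex.norm_natCast, sub_neg_eq_add, add_comm] at this
    linarith
  rw [norm_div, norm_pow]
  exact div_le_self (by positivity) hone

/-- No condition on `z`: at `z = 0` both the `k = 0` term and `1 / z` vanish since `x / 0 = 0`. -/
theorem poincareSeries_sub_mul_poincareSeries_add_one {w : ℂ} (hw : ‖w‖ < 1) (z : ℂ) :
    poincareSeries w z - w * poincareSeries w (z + 1) = 1 / z := by
  have hshift : w * poincareSeries w (z + 1) = ∑' k : ℕ, w ^ (k + 1) / (z + (k + 1 : ℕ)) := by
    rw [poincareSeries, ← tsum_mul_left]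
    congr 1 with k
    push_cast
    ring
  rw [hshift, poincareSeries, (summable_pow_div_add_natCast hw z).tsum_eq_zero_add]
  simp

theorem norm_poincareSeries_le {w z : ℂ} (hw : ‖w‖ < 1) {c : ℝ} (hc : 0 < c)
    (hz : ∀ k : ℕ, c ≤ ‖z + k‖) : ‖poincareSeries w z‖ ≤ (1 - ‖w‖)⁻¹ / c := by
  have hterm : ∀ k : ℕ, ‖w ^ k / (z + k)‖ ≤ ‖w‖ ^ k / c := fun k => by
    rw [norm_div, norm_pow]
    exact div_le_div_of_nonneg_left (by positivity) hc (hz k)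
  have hgeom : Summable fun k : ℕ => ‖w‖ ^ k / c :=
    (summable_geometric_of_lt_one (norm_nonneg w) hw).div_const c
  calc ‖poincareSeries w z‖ ≤ ∑' k : ℕ, ‖w‖ ^ k / c := tsum_of_norm_bounded hgeom.hasSum hterm
    _ = (1 - ‖w‖)⁻¹ / c := by rw [tsum_div_const, tsum_geometric_of_lt_one (norm_nonneg w) hw]

theorem eq_poincareSeries_of_bounded {w z : ℂ} (hw : ‖w‖ < 1) {c : ℝ} (hc : 0 < c)
    (hz : ∀ m : ℕ, c ≤ ‖z + m‖) {ψ : ℂ → ℂ} (hψb : ∃ C, ∀ n : ℕ, ‖ψ (z + n)‖ ≤ C)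
    (hψ : ∀ n : ℕ, ψ (z + n) - w * ψ (z + n + 1) = 1 / (z + n)) :
    ψ z = poincareSeries w z := by
  have hz' : ∀ n k : ℕ, c ≤ ‖z + n + k‖ := fun n k => by
    simpa [add_assoc] using hz (n + k)
  obtain ⟨C, hC⟩ := hψb
  have key := eq_zero_of_bounded_of_eq_smul_succ hw
    (u := fun n => ψ (z + n) - poincareSeries w (z + n))
    ⟨C + (1 - ‖w‖)⁻¹ / c, fun n =>
      (norm_sub_le _ _).trans (add_le_add (hC n) (norm_poincareSeries_le hw hc (hz' n)))⟩
    (fun n => by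
      simp only [smul_eq_mul, Nat.cast_succ, ← add_assoc]
      linear_combination hψ n - poincareSeries_sub_mul_poincareSeries_add_one hw (z + n))
  simpa [sub_eq_zero] using key

theorem exists_pos_le_norm_add_ofReal {z : ℂ} (hz : z ∈ slitPlane) :
    ∃ c > 0, ∀ s : ℝ, 0 ≤ s → c ≤ ‖z + s‖ := by
  rcases mem_slitPlane_iff.1 hz with hre | him
  · refine ⟨z.re, hre, fun s hs => ?_⟩
    calc z.re ≤ (z + s).re := by simpa using hs
      _ ≤ ‖z + s‖ := re_le_norm _
  · refine ⟨|z.im|, abs_pos.2 him, fun s _ => ?_⟩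
    simpa using abs_im_le_norm (z + s)

theorem stmt_10_general (w : ℂ) (hw1 : ‖w‖ < 1) :
    (∀ z : ℂ, (∀ k : ℕ, z + (k : ℂ) ≠ 0) →
      Summable (fun k : ℕ => w ^ k / (z + (k : ℂ)))) ∧
      (∀ z : ℂ, (∀ k : ℕ, z + (k : ℂ) ≠ 0) →
        (∑' k : ℕ, w ^ k / (z + (k : ℂ))) -
            w * (∑' k : ℕ, w ^ k / (z + 1 + (k : ℂ))) = 1 / z) ∧
      ∀ z₀ : ℂ, ¬(z₀.im = 0 ∧ z₀.re ≤ 0) →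
        ∀ ψ : ℂ → ℂ,
          (∃ C : ℝ, ∀ t : ℝ, 0 ≤ t → ‖ψ (z₀ + (t : ℂ))‖ ≤ C) →
          (∀ t : ℝ, 0 ≤ t →
            ψ (z₀ + (t : ℂ)) - w * ψ (z₀ + (t : ℂ) + 1) = 1 / (z₀ + (t : ℂ))) →
          ∀ t : ℝ, 0 ≤ t →
            ψ (z₀ + (t : ℂ)) = ∑' k : ℕ, w ^ k / (z₀ + (t : ℂ) + (k : ℂ)) := by
  refine ⟨fun z _ => summable_pow_div_add_natCast hw1 z,
    fun z _ => poincareSeries_sub_mul_poincareSeries_add_one hw1 z, ?_⟩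
  intro z₀ hz₀ ψ ⟨C, hC⟩ hψ t ht
  obtain ⟨c, hc, hlow⟩ := exists_pos_le_norm_add_ofReal (z := z₀) <| by
    rw [mem_slitPlane_iff]
    by_contra! h
    exact hz₀ ⟨h.2, h.1⟩
  have hcast : ∀ n : ℕ, z₀ + t + n = z₀ + ((t + n : ℝ) : ℂ) := fun n => by push_cast; ring
  have htn : ∀ n : ℕ, 0 ≤ t + n := fun n => by positivity
  refine eq_poincareSeries_of_bounded hw1 hc (fun m => ?_) ⟨C, fun n => ?_⟩ fun n => ?_
  · rw [hcast]; exact hlow _ (htn m)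
  · rw [hcast]; exact hC _ (htn n)
  · rw [hcast]; exact hψ _ (htn n)

/-- Poincaré's example: `φ^P(z) = Σ_k wᵏ/(z+k)` converges on `ℂ∖{0,-1,-2,…}`, satisfies
the difference equation `φ(z) − wφ(z+1) = 1/z` there, and its restriction to any
half-line `z₀ + ℝ≥0` with `z₀ ∉ (−∞,0]` is the unique bounded solution of that
difference equation on the half-line. -/
theorem stmt_10 (w : ℂ) (hw0 : w ≠ 0) (hw1 : ‖w‖ < 1) :
    (∀ z : ℂ, (∀ k : ℕ, z + (k : ℂ) ≠ 0) →
      Summable (fun k : ℕ => w ^ k / (z + (k : ℂ)))) ∧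
      (∀ z : ℂ, (∀ k : ℕ, z + (k : ℂ) ≠ 0) →
        (∑' k : ℕ, w ^ k / (z + (k : ℂ))) -
            w * (∑' k : ℕ, w ^ k / (z + 1 + (k : ℂ))) = 1 / z) ∧
      ∀ z₀ : ℂ, ¬(z₀.im = 0 ∧ z₀.re ≤ 0) →
        ∀ ψ : ℂ → ℂ,
          (∃ C : ℝ, ∀ t : ℝ, 0 ≤ t → ‖ψ (z₀ + (t : ℂ))‖ ≤ C) →
          (∀ t : ℝ, 0 ≤ t →
            ψ (z₀ + (t : ℂ)) - w * ψ (z₀ + (t : ℂ) + 1) = 1 / (z₀ + (t : ℂ))) →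
          ∀ t : ℝ, 0 ≤ t →
            ψ (z₀ + (t : ℂ)) = ∑' k : ℕ, w ^ k / (z₀ + (t : ℂ) + (k : ℂ)) :=
  stmt_10_general w hw1
end

section
/- Let s ∈ ℂ with Re s < 0 and w := e^s. For every θ ∈ (−π/2, π/2) and every z ∈ ℂ with Re(z·e^{iθ}) > 0, the integral e^{iθ}∫₀^{+∞} e^{−z·ξe^{iθ}}·(1 − w·e^{−ξe^{iθ}})^{−1} dξ converges and equals Σ_{k≥0} w^k/(z+k). -/
/-!
On the ray `ξ ↦ ξ e^{iθ}`, `ξ ≥ 0`, we have `‖w e^{-ξ e^{iθ}}‖ ≤ ‖w‖ < 1`, so the Borel transform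
expands into a geometric series whose `k`-th term has Laplace integral `wᵏ / ((z + k) e^{iθ})`.
Termwise integration is justified because the integrals of the norms of the terms are
`‖w‖ᵏ / Re((z + k) e^{iθ}) ≤ ‖w‖ᵏ / Re(z e^{iθ})`.
-/

open MeasureTheory Set
open scoped Complex

lemma norm_inv_one_sub_le_inv_one_sub_norm {x : ℂ} (hx : ‖x‖ < 1) :
    ‖(1 - x)⁻¹‖ ≤ (1 - ‖x‖)⁻¹ := by
  rw [norm_inv]
  refine inv_anti₀ (sub_pos.2 hx) ?_
  simpa using norm_sub_norm_le (1 : ℂ) x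

lemma norm_mul_cexp_neg_mul_ofReal_le {w b : ℂ} (hb : 0 ≤ b.re) {ξ : ℝ} (hξ : 0 ≤ ξ) :
    ‖w * cexp (-b * ξ)‖ ≤ ‖w‖ := by
  rw [norm_mul, Complex.norm_exp]
  refine mul_le_of_le_one_right (norm_nonneg w) (Real.exp_le_one_iff.2 ?_)
  simpa using mul_nonneg hb hξ

lemma integrableOn_cexp_neg_mul_Ioi {u : ℂ} (hu : 0 < u.re) :
    IntegrableOn (fun x : ℝ => cexp (-u * x)) (Ioi 0) :=
  integrableOn_exp_mul_complex_Ioi (by simpa using hu) 0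

lemma integral_cexp_neg_mul_Ioi {u : ℂ} (hu : 0 < u.re) :
    ∫ x in Ioi (0 : ℝ), cexp (-u * x) = u⁻¹ := by
  rw [integral_exp_mul_complex_Ioi (by simpa using hu) 0]
  simp

lemma integral_norm_cexp_neg_mul_Ioi {u : ℂ} (hu : 0 < u.re) :
    ∫ x in Ioi (0 : ℝ), ‖cexp (-u * x)‖ = u.re⁻¹ := by
  simp_rw [Complex.norm_exp, Complex.mul_re, Complex.ofReal_re, Complex.ofReal_im, mul_zero,
    sub_zero, Complex.neg_re]
  rw [integral_exp_mul_Ioi (neg_lt_zero.2 hu) 0]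
  simp

section GeometricLaplace

variable {a b w : ℂ}

lemma hasSum_cexp_neg_mul_mul_inv_one_sub (hb : 0 ≤ b.re) (hw : ‖w‖ < 1) {ξ : ℝ} (hξ : 0 ≤ ξ) :
    HasSum (fun k : ℕ => w ^ k * cexp (-(a + k * b) * ξ))
      (cexp (-a * ξ) * (1 - w * cexp (-b * ξ))⁻¹) := by
  have hlt : ‖w * cexp (-b * ξ)‖ < 1 := (norm_mul_cexp_neg_mul_ofReal_le hb hξ).trans_lt hw
  have hterm : ∀ k : ℕ,
      cexp (-a * ξ) * (w * cexp (-b * ξ)) ^ k = w ^ k * cexp (-(a + k * b) * ξ) := fun k => by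
    rw [mul_pow, ← Complex.exp_nat_mul, mul_left_comm, ← Complex.exp_add]
    ring_nf
  simpa only [hterm] using (hasSum_geometric_of_norm_lt_one hlt).mul_left (cexp (-a * ξ))

lemma integrableOn_cexp_neg_mul_mul_inv_one_sub (ha : 0 < a.re) (hb : 0 ≤ b.re) (hw : ‖w‖ < 1) :
    IntegrableOn (fun ξ : ℝ => cexp (-a * ξ) * (1 - w * cexp (-b * ξ))⁻¹) (Ioi 0) := by
  refine ((integrableOn_cexp_neg_mul_Ioi ha).norm.mul_const (1 - ‖w‖)⁻¹).mono'
    (by fun_prop) ?_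
  filter_upwards [ae_restrict_mem measurableSet_Ioi] with ξ hξ
  have hle : ‖w * cexp (-b * ξ)‖ ≤ ‖w‖ := norm_mul_cexp_neg_mul_ofReal_le hb hξ.le
  rw [norm_mul]
  gcongr
  calc ‖(1 - w * cexp (-b * ξ))⁻¹‖ ≤ (1 - ‖w * cexp (-b * ξ)‖)⁻¹ :=
        norm_inv_one_sub_le_inv_one_sub_norm (hle.trans_lt hw)
    _ ≤ (1 - ‖w‖)⁻¹ := by gcongr

theorem hasSum_integral_cexp_neg_mul_mul_inv_one_sub (ha : 0 < a.re) (hb : 0 ≤ b.re)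
    (hw : ‖w‖ < 1) :
    HasSum (fun k : ℕ => w ^ k / (a + k * b))
      (∫ ξ in Ioi (0 : ℝ), cexp (-a * ξ) * (1 - w * cexp (-b * ξ))⁻¹) := by
  have hre_eq : ∀ k : ℕ, (a + k * b).re = a.re + k * b.re := fun k => by simp
  have hre : ∀ k : ℕ, 0 < (a + k * b).re := fun k => by rw [hre_eq]; positivity
  have hsummable :
      Summable fun k : ℕ => ∫ ξ in Ioi (0 : ℝ), ‖w ^ k * cexp (-(a + k * b) * ξ)‖ := by
    simp_rw [norm_mul, integral_const_mul, integral_norm_cexp_neg_mul_Ioi (hre _), norm_pow]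
    refine (summable_geometric_of_lt_one (norm_nonneg w) hw |>.mul_right a.re⁻¹).of_nonneg_of_le
      (fun k => mul_nonneg (by positivity) (inv_nonneg.2 (hre k).le)) fun k => ?_
    refine mul_le_mul_of_nonneg_left (inv_anti₀ ha ?_) (by positivity)
    rw [hre_eq]
    exact le_add_of_nonneg_right (by positivity)
  have := hasSum_integral_of_summable_integral_norm
    (fun k => (integrableOn_cexp_neg_mul_Ioi (hre k)).const_mul (w ^ k)) hsummable
  simp_rw [integral_const_mul, integral_cexp_neg_mul_Ioi (hre _), ← div_eq_mul_inv] at this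
  rwa [setIntegral_congr_fun measurableSet_Ioi fun ξ hξ =>
    (hasSum_cexp_neg_mul_mul_inv_one_sub hb hw (le_of_lt hξ)).tsum_eq.symm]

end GeometricLaplace

/-- Borel–Laplace summation for Poincaré's example: for `Re s < 0`, `w = e^s`,
`θ ∈ (−π/2, π/2)` and `Re(z e^{iθ}) > 0`, the Laplace integral of the Borel transform
`(1 − w e^{−ζ})^{-1}` in the direction `θ` converges and equals `Σ_k wᵏ/(z+k)`. -/
theorem stmt_11 (s : ℂ) (hs : s.re < 0) (θ : ℝ)
    (hθ : θ ∈ Set.Ioo (-(Real.pi / 2)) (Real.pi / 2)) (z : ℂ)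
    (hz : 0 < (z * Complex.exp ((θ : ℂ) * Complex.I)).re) :
    IntegrableOn
        (fun ξ : ℝ => Complex.exp (-z * ((ξ : ℂ) * Complex.exp ((θ : ℂ) * Complex.I))) *
          (1 - Complex.exp s *
            Complex.exp (-((ξ : ℂ) * Complex.exp ((θ : ℂ) * Complex.I))))⁻¹)
        (Set.Ioi (0:ℝ)) ∧
      Complex.exp ((θ : ℂ) * Complex.I) *
          (∫ ξ in Set.Ioi (0:ℝ),
            Complex.exp (-z * ((ξ : ℂ) * Complex.exp ((θ : ℂ) * Complex.I))) *
              (1 - Complex.exp s *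
                Complex.exp (-((ξ : ℂ) * Complex.exp ((θ : ℂ) * Complex.I))))⁻¹) =
        ∑' k : ℕ, Complex.exp s ^ k / (z + (k : ℂ)) := by
  set c := cexp (θ * Complex.I)
  have hc : 0 ≤ c.re := by
    simpa [c, Complex.exp_ofReal_mul_I_re] using (Real.cos_pos_of_mem_Ioo hθ).le
  have hw : ‖cexp s‖ < 1 := by simpa [Complex.norm_exp] using hs
  have hintegrand : (fun ξ : ℝ => cexp (-z * (ξ * c)) * (1 - cexp s * cexp (-(ξ * c)))⁻¹) =
      fun ξ : ℝ => cexp (-(z * c) * ξ) * (1 - cexp s * cexp (-c * ξ))⁻¹ := by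
    funext ξ; ring_nf
  rw [hintegrand]
  refine ⟨integrableOn_cexp_neg_mul_mul_inv_one_sub hz hc hw, ?_⟩
  rw [← (hasSum_integral_cexp_neg_mul_mul_inv_one_sub hz hc hw).tsum_eq, ← tsum_mul_left]
  refine tsum_congr fun k => ?_
  rw [← add_mul, mul_div_assoc', mul_comm c, mul_div_mul_right _ _ (Complex.exp_ne_zero _)]
end

section
/- Let s ∈ ℂ with Re s < 0. (i) For every σ ∈ (0, −Re s) there exists A > 0 such that |1/(1 − e^{s−ζ})| ≤ A for all ζ ∈ ℂ with Re ζ ≥ −σ. (ii) For every δ > 0 there exists B > 0 such that |1/(1 − e^{s−ζ})| ≤ B·e^{Re ζ} for all ζ ∈ ℂ with dist(ζ, s + 2πiℤ) ≥ δ. -/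
/-!
Bounding `(1 - e^w)⁻¹` reduces to bounding `|1 - e^w| ≥ |1 - e^{Re w}|` from below. This settles
(i) and, more generally, any half-plane `Re w ≤ r < 0`. Writing
`(1 - e^w)⁻¹ = -e^{-w} (1 - e^{-w})⁻¹` reflects the half-planes `Re w ≥ r > 0` onto it and turns (ii)
into the boundedness of `(1 - e^u)⁻¹` at distance `≥ δ` from its poles `2πiℤ`. Away from the
strip `|Re u| ≤ 1` this is the half-plane estimate; on the strip, `2πi`-periodicity moves `u` into
a compact set avoiding the poles, where the function is continuous.
-/

open Complex
open scoped Real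

def awayFromTwoPiIInt (δ : ℝ) : Set ℂ := {u | ∀ k : ℤ, δ ≤ ‖u - k * (2 * π * I)‖}

namespace awayFromTwoPiIInt

variable {δ : ℝ} {u : ℂ}

lemma isClosed (δ : ℝ) : IsClosed (awayFromTwoPiIInt δ) := by
  simp only [awayFromTwoPiIInt, Set.ofPred_forall]
  exact isClosed_iInter fun k => isClosed_le continuous_const (by fun_prop)

lemma sub_int_mul_mem (hu : u ∈ awayFromTwoPiIInt δ) (n : ℤ) :
    u - n * (2 * π * I) ∈ awayFromTwoPiIInt δ := fun k => by
  simpa [sub_sub, ← add_mul] using hu (n + k)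

lemma one_sub_exp_ne_zero (hδ : 0 < δ) (hu : u ∈ awayFromTwoPiIInt δ) : 1 - exp u ≠ 0 := by
  intro h
  obtain ⟨k, rfl⟩ := exp_eq_one_iff.mp (sub_eq_zero.mp h).symm
  simpa [hδ.not_ge] using hu k

end awayFromTwoPiIInt

lemma exists_abs_im_sub_int_mul_two_pi_I_le (u : ℂ) : ∃ k : ℤ, |(u - k * (2 * π * I)).im| ≤ π := by
  refine ⟨round (u.im / (2 * π)), ?_⟩
  have h2π : 0 < 2 * π := by positivity
  have key : (u - round (u.im / (2 * π)) * (2 * π * I)).im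
      = 2 * π * (u.im / (2 * π) - round (u.im / (2 * π))) := by
    simp only [sub_im, mul_im, intCast_re, intCast_im, mul_re, ofReal_re, ofReal_im, I_re, I_im,
      re_ofNat, im_ofNat]
    field_simp
    ring
  rw [key, abs_mul, abs_of_pos h2π]
  linarith [mul_le_mul_of_nonneg_left (abs_sub_round (u.im / (2 * π))) h2π.le]

lemma abs_one_sub_exp_re_le_norm_one_sub_exp (u : ℂ) : |1 - Real.exp u.re| ≤ ‖1 - exp u‖ := by
  simpa [norm_exp] using abs_norm_sub_norm_le (1 : ℂ) (exp u)

lemma norm_one_sub_exp_inv_le_of_re_le {r : ℝ} (hr : r < 0) {u : ℂ} (hu : u.re ≤ r) :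
    ‖(1 - exp u)⁻¹‖ ≤ (1 - Real.exp r)⁻¹ := by
  have hexp : Real.exp u.re ≤ Real.exp r := Real.exp_le_exp.mpr hu
  have hpos : 0 < 1 - Real.exp r := sub_pos.mpr (Real.exp_lt_one_iff.mpr hr)
  rw [norm_inv]
  refine inv_anti₀ hpos ?_
  calc 1 - Real.exp r ≤ |1 - Real.exp u.re| := by rw [abs_of_nonneg (by linarith)]; linarith
    _ ≤ ‖1 - exp u‖ := abs_one_sub_exp_re_le_norm_one_sub_exp u

lemma norm_one_sub_exp_inv_eq (u : ℂ) :
    ‖(1 - exp u)⁻¹‖ = Real.exp (-u.re) * ‖(1 - exp (-u))⁻¹‖ := by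
  have : 1 - exp u = -exp u * (1 - exp (-u)) := by
    rw [mul_sub, mul_one, neg_mul, ← exp_add, add_neg_cancel, exp_zero]
    ring
  rw [this, mul_inv, norm_mul, norm_inv, norm_neg, norm_exp, ← Real.exp_neg]

lemma exists_norm_one_sub_exp_inv_le_of_abs_re_le {δ : ℝ} (hδ : 0 < δ) :
    ∃ C, ∀ u ∈ awayFromTwoPiIInt δ, |u.re| ≤ 1 → ‖(1 - exp u)⁻¹‖ ≤ C := by
  set K := Metric.closedBall (0 : ℂ) (1 + π) ∩ awayFromTwoPiIInt δ
  have hK : IsCompact K := (isCompact_closedBall _ _).inter_right (awayFromTwoPiIInt.isClosed δ)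
  have hcont : ContinuousOn (fun u => (1 - exp u)⁻¹) K :=
    (continuous_const.sub continuous_exp).continuousOn.inv₀
      fun u hu => awayFromTwoPiIInt.one_sub_exp_ne_zero hδ hu.2
  obtain ⟨C, hC⟩ := hK.exists_bound_of_continuousOn hcont
  refine ⟨C, fun u hu hre => ?_⟩
  obtain ⟨k, him⟩ := exists_abs_im_sub_int_mul_two_pi_I_le u
  have hmem : u - k * (2 * π * I) ∈ K := by
    refine ⟨?_, awayFromTwoPiIInt.sub_int_mul_mem hu k⟩
    rw [mem_closedBall_zero_iff]
    refine (norm_le_abs_re_add_abs_im _).trans (add_le_add ?_ him)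
    simpa using hre
  simpa only [exp_periodic.sub_int_mul_eq] using hC _ hmem

lemma exists_norm_one_sub_exp_inv_le {δ : ℝ} (hδ : 0 < δ) :
    ∃ C, 0 < C ∧ ∀ u ∈ awayFromTwoPiIInt δ, ‖(1 - exp u)⁻¹‖ ≤ C := by
  obtain ⟨C, hC⟩ := exists_norm_one_sub_exp_inv_le_of_abs_re_le hδ
  have hpos : 0 < (1 - Real.exp (-1))⁻¹ :=
    inv_pos.mpr (sub_pos.mpr (Real.exp_lt_one_iff.mpr (by norm_num)))
  refine ⟨max C (1 - Real.exp (-1))⁻¹, lt_max_of_lt_right hpos, fun u hu => ?_⟩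
  rcases le_or_gt |u.re| 1 with hre | hre
  · exact (hC u hu hre).trans (le_max_left _ _)
  refine le_trans ?_ (le_max_right _ _)
  rcases lt_abs.mp hre with hre_gt | hre_lt
  · rw [norm_one_sub_exp_inv_eq]
    refine (mul_le_of_le_one_left (norm_nonneg _) (Real.exp_le_one_iff.mpr (by linarith))).trans ?_
    exact norm_one_sub_exp_inv_le_of_re_le (by norm_num) (by rw [neg_re]; linarith)
  · exact norm_one_sub_exp_inv_le_of_re_le (by norm_num) (by linarith)

theorem stmt_12_general (s : ℂ) :
    (∀ σ : ℝ, σ ∈ Set.Ioo 0 (-s.re) →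
      ∃ A : ℝ, 0 < A ∧ ∀ ζ : ℂ, -σ ≤ ζ.re → ‖(1 - Complex.exp (s - ζ))⁻¹‖ ≤ A) ∧
      ∀ δ : ℝ, 0 < δ →
        ∃ B : ℝ, 0 < B ∧ ∀ ζ : ℂ,
          (∀ m : ℤ, δ ≤ dist ζ (s + ((2 * Real.pi : ℝ) : ℂ) * Complex.I * (m : ℂ))) →
          ‖(1 - Complex.exp (s - ζ))⁻¹‖ ≤ B * Real.exp ζ.re := by
  refine ⟨fun σ hσ => ?_, fun δ hδ => ?_⟩
  · have hr : s.re + σ < 0 := by linarith [hσ.2]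
    refine ⟨(1 - Real.exp (s.re + σ))⁻¹, inv_pos.mpr (sub_pos.mpr (Real.exp_lt_one_iff.mpr hr)),
      fun ζ hζ => norm_one_sub_exp_inv_le_of_re_le hr ?_⟩
    simp only [sub_re]
    linarith
  · obtain ⟨C, hC, hbound⟩ := exists_norm_one_sub_exp_inv_le hδ
    refine ⟨C * Real.exp (-s.re), by positivity, fun ζ hζ => ?_⟩
    have hmem : ζ - s ∈ awayFromTwoPiIInt δ := fun k => by
      convert hζ k using 1
      rw [dist_eq_norm]
      push_cast
      congr 1
      ring
    rw [norm_one_sub_exp_inv_eq, ← neg_re, neg_sub]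
    calc Real.exp (ζ - s).re * ‖(1 - exp (ζ - s))⁻¹‖ ≤ Real.exp (ζ - s).re * C := by
          gcongr; exact hbound _ hmem
      _ = C * Real.exp (-s.re) * Real.exp ζ.re := by
          rw [sub_re, sub_eq_add_neg, Real.exp_add]; ring

/-- Estimates for the Borel transform `(1 − e^{s−ζ})^{-1}` of Poincaré's example:
(i) it is bounded on each half-plane `{Re ζ ≥ −σ}` with `0 < σ < −Re s`;
(ii) away from the poles `s + 2πiℤ` it is bounded by `B·e^{Re ζ}`. -/
theorem stmt_12 (s : ℂ) (hs : s.re < 0) :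
    (∀ σ : ℝ, σ ∈ Set.Ioo 0 (-s.re) →
      ∃ A : ℝ, 0 < A ∧ ∀ ζ : ℂ, -σ ≤ ζ.re → ‖(1 - Complex.exp (s - ζ))⁻¹‖ ≤ A) ∧
      ∀ δ : ℝ, 0 < δ →
        ∃ B : ℝ, 0 < B ∧ ∀ ζ : ℂ,
          (∀ m : ℤ, δ ≤ dist ζ (s + ((2 * Real.pi : ℝ) : ℂ) * Complex.I * (m : ℂ))) →
          ‖(1 - Complex.exp (s - ζ))⁻¹‖ ≤ B * Real.exp ζ.re :=
  stmt_12_general s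
end

section
/- Identify ℂ[[z^{−1}]] with the ring ℂ[[X]] of formal power series in one variable via X = z^{−1}, and let ∂ : ℂ[[X]] → ℂ[[X]] be the derivation ∂φ := −X²·(dφ/dX) (corresponding to d/dz). Then for every χ, ψ ∈ ℂ[[X]] and every integer n ≥ 1, Σ_{k=0}^{n} (−1)^k·binom(n,k)·χ^{n−k}·∂^{n−1}(χ^k·ψ) = 0. -/
/-!
Let `S_n^j(f) = Σ_k (−1)^k C(n,k) χ^{n−k} D^j(χ^k f)` for an arbitrary derivation `D`.
For `j = 0` this is `(χ − χ)^n f = 0` when `n ≥ 1`. Applying `D` to `S_{n+1}^j(f)` and using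
the Leibniz rule gives `S_{n+1}^{j+1} = D S_{n+1}^j − (n+1) Dχ · S_n^j`, so by induction on `j`
every `S_n^j` with `j < n` vanishes; the theorem is the case `j = n − 1`, `D = ∂`.
-/

open Finset

/-- The derivative `d/dX` of a formal power series. -/
noncomputable def dX (φ : PowerSeries ℂ) : PowerSeries ℂ :=
  PowerSeries.mk fun n => ((n : ℂ) + 1) * PowerSeries.coeff (n + 1) φ

/-- The derivation `∂ = d/dz` on `ℂ[[z⁻¹]] ≅ ℂ[[X]]` (with `X = z⁻¹`): `∂φ = −X²·φ'`. -/
noncomputable def pd (φ : PowerSeries ℂ) : PowerSeries ℂ :=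
  -(PowerSeries.X ^ 2 * dX φ)

namespace Derivation

variable {R A : Type*} [CommRing R] [CommRing A] [Algebra R A]

def lagrangeSum (D : Derivation R A A) (χ : A) (n j : ℕ) (f : A) : A :=
  ∑ k ∈ range (n + 1), ((-1 : R) ^ k * (n.choose k : R)) • (χ ^ (n - k) * D^[j] (χ ^ k * f))

variable (D : Derivation R A A) (χ f : A)

theorem lagrangeSum_iterate_zero {n : ℕ} (hn : n ≠ 0) : lagrangeSum D χ n 0 f = 0 := by
  have hcoeff : ∑ k ∈ range (n + 1), (-1 : R) ^ k * (n.choose k : R) = 0 := by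
    simpa [zero_pow hn] using (add_pow (-1 : R) 1 n).symm
  have hterm : ∀ k ∈ range (n + 1), χ ^ (n - k) * (χ ^ k * f) = χ ^ n * f := fun k hk => by
    rw [← mul_assoc, ← pow_add, Nat.sub_add_cancel (mem_range_succ_iff.mp hk)]
  simp only [lagrangeSum, Function.iterate_zero, id_eq]
  rw [sum_congr rfl fun k hk => congrArg _ (hterm k hk), ← sum_smul, hcoeff, zero_smul]

/-- Differentiating the factor `χ^{n−k}` is what lowers `n`: `(n+1−k) C(n+1,k) = (n+1) C(n,k)`. -/
theorem lagrangeSum_succ_succ (m j : ℕ) :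
    lagrangeSum D χ (m + 1) (j + 1) f =
      D (lagrangeSum D χ (m + 1) j f) - ((m + 1 : ℕ) : R) • (D χ * lagrangeSum D χ m j f) := by
  have hterm : ∀ k ∈ range (m + 1),
      D (((-1 : R) ^ k * ((m + 1).choose k : R)) • (χ ^ (m + 1 - k) * D^[j] (χ ^ k * f))) =
        ((-1 : R) ^ k * ((m + 1).choose k : R)) • (χ ^ (m + 1 - k) * D^[j + 1] (χ ^ k * f)) +
          ((m + 1 : ℕ) : R) • (D χ *
            (((-1 : R) ^ k * (m.choose k : R)) • (χ ^ (m - k) * D^[j] (χ ^ k * f)))) := by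
    intro k hk
    have hkm : m + 1 - k = m - k + 1 := by have := mem_range.mp hk; omega
    have hchoose : ((m.choose k * (m + 1) : ℕ) : A) = ((m + 1).choose k * (m - k + 1) : ℕ) := by
      rw [Nat.choose_mul_succ_eq, hkm]
    push_cast at hchoose
    rw [map_smul, leibniz, leibniz_pow, Function.iterate_succ_apply', hkm, Nat.add_sub_cancel]
    simp only [smul_eq_mul, nsmul_eq_mul]
    simp only [Algebra.smul_def, map_mul, map_pow, map_neg, map_one]
    push_cast
    linear_combination (-(-1) ^ k * χ ^ (m - k) * D χ * D^[j] (χ ^ k * f)) * hchoose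
  simp only [lagrangeSum, map_sum]
  rw [sum_range_succ _ (m + 1), sum_range_succ _ (m + 1), sum_congr rfl hterm,
    sum_add_distrib, ← smul_sum, ← mul_sum]
  simp only [Nat.choose_self, Nat.sub_self, pow_zero, one_mul, map_smul,
    Function.iterate_succ_apply']
  abel

theorem lagrangeSum_eq_zero {n j : ℕ} (hjn : j < n) : lagrangeSum D χ n j f = 0 := by
  induction j generalizing n with
  | zero => exact lagrangeSum_iterate_zero D χ f (Nat.pos_iff_ne_zero.mp hjn)
  | succ j ih =>
    obtain ⟨m, rfl⟩ : ∃ m, n = m + 1 := ⟨n - 1, by omega⟩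
    rw [lagrangeSum_succ_succ, ih (by omega), ih (by omega), map_zero, mul_zero, smul_zero,
      sub_zero]

end Derivation

open PowerSeries in
noncomputable def pdDerivation : Derivation ℂ ℂ⟦X⟧ ℂ⟦X⟧ :=
  (-(X ^ 2 : ℂ⟦X⟧)) • derivative ℂ

theorem coe_pdDerivation : ⇑pdDerivation = pd := by
  funext φ
  have hdX : dX φ = PowerSeries.derivative ℂ φ := by
    ext n
    simp [dX, PowerSeries.coeff_derivative, mul_comm]
  simp [pdDerivation, pd, Derivation.smul_apply, hdX]

/-- The key combinatorial identity behind the Lagrange reversion formula: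
`Σ_{k=0}^{n} (−1)^k C(n,k) χ^{n−k} ∂^{n−1}(χ^k ψ) = 0` for every `n ≥ 1`. -/
theorem stmt_14 (χ ψ : PowerSeries ℂ) (n : ℕ) (hn : 1 ≤ n) :
    ∑ k ∈ Finset.range (n + 1),
        ((-1 : ℂ) ^ k * (n.choose k : ℂ)) • (χ ^ (n - k) * pd^[n - 1] (χ ^ k * ψ)) = 0 := by
  have h := pdDerivation.lagrangeSum_eq_zero χ ψ (Nat.sub_lt hn one_pos)
  rwa [Derivation.lagrangeSum, coe_pdDerivation] at h
end

section
/- Let Δ ⊆ ℂ be a nonempty open set which is star-shaped with respect to 0, i.e. for every ζ ∈ Δ the segment [0,ζ] is contained in Δ. If φ̂ and ψ̂ are holomorphic on Δ, then the function ζ ↦ ∫₀^1 ζ·φ̂(sζ)·ψ̂((1−s)ζ) ds is holomorphic on Δ. -/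
/-!
The integrand `ζ φ(sζ) ψ((1 - s)ζ)` is jointly continuous on `Δ × [0, 1]` and holomorphic in `ζ`
for each `s`, because `Δ` is star-shaped about `0`. Such parametric integrals are holomorphic:
Cauchy's estimate bounds the `ζ`-derivative of the integrand locally uniformly in `s`, so one may
differentiate under the integral sign.
-/

open Set Filter Metric MeasureTheory Topology Interval

theorem aestronglyMeasurable_deriv_of_eventually {𝕜 α E : Type*} [NontriviallyNormedField 𝕜]
    [MeasurableSpace α] {μ : Measure α} [NormedAddCommGroup E] [NormedSpace 𝕜 E]
    {F : 𝕜 → α → E} {x₀ : 𝕜} (hF_meas : ∀ᶠ x in 𝓝 x₀, AEStronglyMeasurable (F x) μ)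
    (hF_diff : ∀ᵐ t ∂μ, DifferentiableAt 𝕜 (F · t) x₀) :
    AEStronglyMeasurable (fun t => deriv (F · t) x₀) μ := by
  classical
  obtain ⟨s, hs, hs_meas⟩ := hF_meas.exists_mem
  -- Difference quotients are only known to be measurable for `x ∈ s`; elsewhere they are set to 0.
  refine aestronglyMeasurable_of_tendsto_ae (𝓝[≠] x₀)
    (f := fun x t => if x ∈ s then slope (F · t) x₀ x else 0) (fun x => ?_) ?_
  · by_cases hx : x ∈ s
    · simp only [hx, if_true, slope, vsub_eq_sub]
      exact ((hs_meas x hx).sub (hs_meas x₀ (mem_of_mem_nhds hs))).const_smul _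
    · simp only [hx, if_false]
      exact aestronglyMeasurable_const
  · filter_upwards [hF_diff] with t ht
    refine ht.hasDerivAt.tendsto_slope.congr' ?_
    filter_upwards [nhdsWithin_le_nhds hs] with x hx
    simp [hx]

theorem differentiableOn_intervalIntegral_of_continuousOn {E : Type*} [NormedAddCommGroup E]
    [NormedSpace ℂ E] {U : Set ℂ} (hU : IsOpen U) {F : ℂ → ℝ → E} {a b : ℝ}
    (hF : ContinuousOn (Function.uncurry F) (U ×ˢ [[a, b]]))
    (hF_diff : ∀ t ∈ [[a, b]], DifferentiableOn ℂ (F · t) U) :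
    DifferentiableOn ℂ (fun z => ∫ t in a..b, F z t) U := by
  intro z₀ hz₀
  obtain ⟨r, hr, hball⟩ : ∃ r > 0, closedBall z₀ (2 * r) ⊆ U := by
    obtain ⟨ε, hε, hεU⟩ := nhds_basis_closedBall.mem_iff.1 (hU.mem_nhds hz₀)
    exact ⟨ε / 2, by positivity, by rwa [mul_div_cancel₀ _ two_ne_zero]⟩
  obtain ⟨M, hM⟩ := ((isCompact_closedBall z₀ (2 * r)).prod isCompact_uIcc)
    |>.exists_bound_of_continuousOn (hF.mono (prod_mono hball subset_rfl))
  have hIoc : Ι a b ⊆ [[a, b]] := uIoc_subset_uIcc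
  have hF_meas : ∀ᶠ x in 𝓝 z₀, AEStronglyMeasurable (F x) (volume.restrict (Ι a b)) :=
    eventually_of_mem (hU.mem_nhds hz₀) fun x hx =>
      ((hF.uncurry_left x hx).mono hIoc).aestronglyMeasurable measurableSet_uIoc
  have hdiff : ∀ t ∈ Ι a b, ∀ x ∈ ball z₀ r, HasDerivAt (F · t) (deriv (F · t) x) x := by
    intro t ht x hx
    have hxU : x ∈ U :=
      hball (closedBall_subset_closedBall (by linarith) (ball_subset_closedBall hx))
    exact ((hF_diff t (hIoc ht)).differentiableAt (hU.mem_nhds hxU)).hasDerivAt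
  -- Cauchy's estimate on the circle of radius `r` about `x`, which lies in `closedBall z₀ (2 * r)`.
  have hderiv_le : ∀ t ∈ Ι a b, ∀ x ∈ ball z₀ r, ‖deriv (F · t) x‖ ≤ M / r := by
    intro t ht x hx
    have hsub : closedBall x r ⊆ closedBall z₀ (2 * r) := by
      refine closedBall_subset_closedBall' ?_
      linarith [mem_ball.1 hx]
    refine Complex.norm_deriv_le_of_forall_mem_sphere_norm_le hr
      ((hF_diff t (hIoc ht)).diffContOnCl_ball (hsub.trans hball)) fun z hz => ?_
    exact hM (z, t) ⟨hsub (sphere_subset_closedBall hz), hIoc ht⟩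
  have hF'_meas : AEStronglyMeasurable (fun t => deriv (F · t) z₀) (volume.restrict (Ι a b)) :=
    aestronglyMeasurable_deriv_of_eventually hF_meas <| (ae_restrict_iff' measurableSet_uIoc).2 <|
      ae_of_all _ fun t ht => (hdiff t ht z₀ (mem_ball_self hr)).differentiableAt
  obtain ⟨-, h⟩ := intervalIntegral.hasDerivAt_integral_of_dominated_loc_of_deriv_le
    (bound := fun _ => M / r) (ball_mem_nhds z₀ hr) hF_meas
    (hF.uncurry_left z₀ hz₀).intervalIntegrable hF'_meas (ae_of_all _ hderiv_le)
    intervalIntegrable_const (ae_of_all _ hdiff)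
  exact h.differentiableAt.differentiableWithinAt

theorem stmt_17_general (Δ : Set ℂ) (hopen : IsOpen Δ)
    (hstar : ∀ ζ ∈ Δ, segment ℝ (0 : ℂ) ζ ⊆ Δ) (φ ψ : ℂ → ℂ)
    (hφ : DifferentiableOn ℂ φ Δ) (hψ : DifferentiableOn ℂ ψ Δ) :
    DifferentiableOn ℂ
      (fun ζ : ℂ => ∫ s in (0:ℝ)..1, ζ * φ ((s : ℂ) * ζ) * ψ ((1 - (s : ℂ)) * ζ)) Δ := by
  have hΔ : StarConvex ℝ 0 Δ := starConvex_iff_segment_subset.2 hstar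
  have hmem : ∀ s ∈ [[(0:ℝ), 1]], MapsTo (fun ζ : ℂ => (s : ℂ) * ζ) Δ Δ := by
    intro s hs ζ hζ
    rw [uIcc_of_le zero_le_one] at hs
    simpa [Complex.real_smul] using hΔ.smul_mem hζ hs.1 hs.2
  have hmem' : ∀ s ∈ [[(0:ℝ), 1]], MapsTo (fun ζ : ℂ => (1 - (s : ℂ)) * ζ) Δ Δ := by
    intro s hs
    have h1s : 1 - s ∈ [[(0:ℝ), 1]] := by
      rw [uIcc_of_le zero_le_one] at hs ⊢
      constructor <;> linarith [hs.1, hs.2]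
    simpa using hmem (1 - s) h1s
  apply differentiableOn_intervalIntegral_of_continuousOn hopen
  · exact (continuous_fst.continuousOn.mul
      (hφ.continuousOn.comp (by fun_prop) fun p hp => hmem p.2 hp.2 hp.1)).mul
      (hψ.continuousOn.comp (by fun_prop) fun p hp => hmem' p.2 hp.2 hp.1)
  · intro s hs
    exact (differentiableOn_id.mul (hφ.comp (by fun_prop) (hmem s hs))).mul
      (hψ.comp (by fun_prop) (hmem' s hs))

/-- If `Δ ⊆ ℂ` is a nonempty open set star-shaped with respect to `0` and `φ̂`, `ψ̂` are
holomorphic on `Δ`, then their convolution `ζ ↦ ∫₀¹ ζ φ̂(sζ) ψ̂((1−s)ζ) ds` is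
holomorphic on `Δ`. -/
theorem stmt_17 (Δ : Set ℂ) (hne : Δ.Nonempty) (hopen : IsOpen Δ)
    (hstar : ∀ ζ ∈ Δ, segment ℝ (0 : ℂ) ζ ⊆ Δ) (φ ψ : ℂ → ℂ)
    (hφ : DifferentiableOn ℂ φ Δ) (hψ : DifferentiableOn ℂ ψ Δ) :
    DifferentiableOn ℂ
      (fun ζ : ℂ => ∫ s in (0:ℝ)..1, ζ * φ ((s : ℂ) * ζ) * ψ ((1 - (s : ℂ)) * ζ)) Δ :=
  stmt_17_general Δ hopen hstar φ ψ hφ hψ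
end

section
/- Let Ω ⊆ ℂ be nonempty, closed and discrete (every point of Ω is isolated), with 0 ∈ Ω and ω + ω' ∈ Ω for all ω, ω' ∈ Ω. Let γ : [0,1] → ℂ∖Ω be a continuous, piecewise continuously differentiable path with γ(0) ≠ 0 and |γ(0)| < |ω| for every ω ∈ Ω∖{0}. Then there exists a continuous map H : [0,1]×[0,1] → ℂ such that for all s, t ∈ [0,1]: (i) H(0,t) = 0; (ii) H(s,t) ∉ Ω whenever s > 0; (iii) H(1,t) − H(s,t) = H(1−s,t); (iv) H(1,t) = γ(t); and (v) H(s,0) = s·γ(0). -/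
/-!
Write `d(z)` for the distance from `z` to `Ω`. Since `Ω + Ω ⊆ Ω`, `d(a) ≤ d(z) + d(a - z)`, so
whenever `d(a) > 0` the weight `Θ_a(z) = d(z) / (d(z) + d(a - z))` is continuous and satisfies
`Θ_a(0) = 0`, `Θ_a(a) = 1`, `Θ_a(a - z) = 1 - Θ_a(z)` and `Θ_a(z) d(a) ≤ d(z)`.

Cut `[0,1]` into steps `[t_j, t_{j+1}]` on which `γ` stays within `d(γ(t_j))` of `γ(t_j)`, and start
with the segment `s ↦ s γ(0)`. A homotopy `H` defined up to time `T = t_j` is continued by moving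
`H(s,T)` along `γ(u) - γ(T)` scaled by `Θ_{γ(T)}(H(s,T))`: the last property of `Θ` keeps this motion
shorter than `d(H(s,T))`, and its symmetry preserves `H(1,u) - H(s,u) = H(1-s,u)`.
-/

open Metric Set

section Weight

variable {E : Type*} [SeminormedAddCommGroup E] {Ω : Set E}

theorem infDist_le_infDist_add_infDist_sub (hΩ : ∀ ω ∈ Ω, ∀ ω' ∈ Ω, ω + ω' ∈ Ω)
    (hne : Ω.Nonempty) (w z : E) : infDist w Ω ≤ infDist z Ω + infDist (w - z) Ω := by
  suffices ∀ ω ∈ Ω, infDist w Ω - infDist (w - z) Ω ≤ dist z ω by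
    linarith [(le_infDist hne).2 this]
  intro ω hω
  have hshift : infDist w Ω ≤ infDist (w - ω) Ω :=
    (le_infDist hne).2 fun ω' hω' => by
      simpa [dist_eq_norm, sub_sub] using infDist_le_dist_of_mem (x := w) (hΩ ω hω ω' hω')
  have := infDist_le_infDist_add_dist (x := w - ω) (y := w - z) (s := Ω)
  rw [dist_sub_left, dist_comm] at this
  linarith

noncomputable def avoidanceWeight (Ω : Set E) (a z : E) : ℝ :=
  infDist z Ω / (infDist z Ω + infDist (a - z) Ω)

variable {a : E}

theorem avoidanceWeight_denom_pos (hΩ : ∀ ω ∈ Ω, ∀ ω' ∈ Ω, ω + ω' ∈ Ω) (hne : Ω.Nonempty)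
    (ha : 0 < infDist a Ω) (z : E) : 0 < infDist z Ω + infDist (a - z) Ω :=
  ha.trans_le (infDist_le_infDist_add_infDist_sub hΩ hne a z)

theorem continuous_avoidanceWeight (hΩ : ∀ ω ∈ Ω, ∀ ω' ∈ Ω, ω + ω' ∈ Ω) (hne : Ω.Nonempty)
    (ha : 0 < infDist a Ω) : Continuous (avoidanceWeight Ω a) :=
  (continuous_infDist_pt Ω).div
    ((continuous_infDist_pt Ω).add ((continuous_infDist_pt Ω).comp (continuous_sub_left a)))
    fun z => (avoidanceWeight_denom_pos hΩ hne ha z).ne'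

theorem avoidanceWeight_zero (h0 : (0 : E) ∈ Ω) : avoidanceWeight Ω a 0 = 0 := by
  simp [avoidanceWeight, infDist_zero_of_mem h0]

theorem avoidanceWeight_self (h0 : (0 : E) ∈ Ω) (ha : 0 < infDist a Ω) :
    avoidanceWeight Ω a a = 1 := by
  simp [avoidanceWeight, infDist_zero_of_mem h0, ha.ne']

theorem avoidanceWeight_sub (hΩ : ∀ ω ∈ Ω, ∀ ω' ∈ Ω, ω + ω' ∈ Ω) (hne : Ω.Nonempty)
    (ha : 0 < infDist a Ω) (z : E) : avoidanceWeight Ω a (a - z) = 1 - avoidanceWeight Ω a z := by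
  have hD := (avoidanceWeight_denom_pos hΩ hne ha z).ne'
  rw [avoidanceWeight, avoidanceWeight, sub_sub_cancel, eq_sub_iff_add_eq, add_comm (infDist z Ω),
    ← add_div, div_self (by rwa [add_comm])]

theorem avoidanceWeight_nonneg (z : E) : 0 ≤ avoidanceWeight Ω a z :=
  div_nonneg infDist_nonneg (add_nonneg infDist_nonneg infDist_nonneg)

theorem avoidanceWeight_mul_infDist_le (hΩ : ∀ ω ∈ Ω, ∀ ω' ∈ Ω, ω + ω' ∈ Ω) (hne : Ω.Nonempty)
    (ha : 0 < infDist a Ω) (z : E) : avoidanceWeight Ω a z * infDist a Ω ≤ infDist z Ω := by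
  rw [avoidanceWeight, div_mul_eq_mul_div, div_le_iff₀ (avoidanceWeight_denom_pos hΩ hne ha z)]
  exact mul_le_mul_of_nonneg_left (infDist_le_infDist_add_infDist_sub hΩ hne a z) infDist_nonneg

theorem add_avoidanceWeight_smul_notMem [NormedSpace ℝ E] (hclosed : IsClosed Ω)
    (hΩ : ∀ ω ∈ Ω, ∀ ω' ∈ Ω, ω + ω' ∈ Ω) (hne : Ω.Nonempty) {z v : E} (hz : z ∉ Ω)
    (hv : ‖v‖ < infDist a Ω) : z + avoidanceWeight Ω a z • v ∉ Ω := by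
  intro hmem
  have hdz : 0 < infDist z Ω := (hclosed.notMem_iff_infDist_pos hne).1 hz
  have ha : 0 < infDist a Ω := (norm_nonneg v).trans_lt hv
  have hΘ := avoidanceWeight_nonneg (Ω := Ω) (a := a) z
  have hle : infDist z Ω ≤ avoidanceWeight Ω a z * ‖v‖ := by
    simpa [dist_eq_norm, norm_smul, abs_of_nonneg hΘ] using infDist_le_dist_of_mem (x := z) hmem
  rcases hΘ.eq_or_lt with h | h
  · rw [← h, zero_mul] at hle
    linarith
  · nlinarith [avoidanceWeight_mul_infDist_le hΩ hne ha z, mul_lt_mul_of_pos_left hv h]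

end Weight

section Homotopy

variable {E : Type*} [NormedAddCommGroup E] [NormedSpace ℝ E] {Ω : Set E} {γ : ℝ → E}
  {T T' : ℝ} {H : ℝ → ℝ → E}

structure IsSymmetricHomotopyOn (Ω : Set E) (γ : ℝ → E) (T : ℝ) (H : ℝ → ℝ → E) : Prop where
  continuousOn : ContinuousOn (fun p : ℝ × ℝ => H p.1 p.2) (Icc 0 1 ×ˢ Icc 0 T)
  apply_zero : ∀ u ∈ Icc 0 T, H 0 u = 0
  notMem : ∀ s ∈ Icc (0 : ℝ) 1, ∀ u ∈ Icc 0 T, 0 < s → H s u ∉ Ω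
  symm : ∀ s ∈ Icc (0 : ℝ) 1, ∀ u ∈ Icc 0 T, H 1 u - H s u = H (1 - s) u
  apply_one : ∀ u ∈ Icc 0 T, H 1 u = γ u

theorem isSymmetricHomotopyOn_segment (hγ0 : γ 0 ≠ 0)
    (hsmall : ∀ ω ∈ Ω, ω ≠ 0 → ‖γ 0‖ < ‖ω‖) :
    IsSymmetricHomotopyOn Ω γ 0 (fun s _ => s • γ 0) where
  continuousOn := by fun_prop
  apply_zero _ _ := zero_smul ℝ _
  notMem s hs _ _ hpos hmem := by
    have := hsmall _ hmem (smul_ne_zero hpos.ne' hγ0)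
    rw [norm_smul, Real.norm_of_nonneg hpos.le] at this
    nlinarith [hs.2, norm_nonneg (γ 0)]
  symm s _ _ _ := by simp only [← sub_smul]
  apply_one u hu := by rw [one_smul, le_antisymm hu.2 hu.1]

noncomputable def extendHomotopy (Ω : Set E) (γ : ℝ → E) (T : ℝ) (H : ℝ → ℝ → E) (s u : ℝ) : E :=
  H s (min u T) + avoidanceWeight Ω (γ T) (H s T) • (γ (max u T) - γ T)

theorem extendHomotopy_of_le {s u : ℝ} (hu : u ≤ T) : extendHomotopy Ω γ T H s u = H s u := by
  simp [extendHomotopy, min_eq_left hu, max_eq_right hu]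

theorem extendHomotopy_of_ge {s u : ℝ} (hu : T ≤ u) :
    extendHomotopy Ω γ T H s u =
      H s T + avoidanceWeight Ω (γ T) (H s T) • (γ u - γ T) := by
  simp [extendHomotopy, min_eq_right hu, max_eq_left hu]

theorem IsSymmetricHomotopyOn.continuousOn_extendHomotopy (h : IsSymmetricHomotopyOn Ω γ T H)
    (hΩ : ∀ ω ∈ Ω, ∀ ω' ∈ Ω, ω + ω' ∈ Ω) (hne : Ω.Nonempty) (hT : 0 ≤ T)
    (hTT' : T ≤ T') (hγ : ContinuousOn γ (Icc T T')) (hγT : 0 < infDist (γ T) Ω) :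
    ContinuousOn (fun p : ℝ × ℝ => extendHomotopy Ω γ T H p.1 p.2) (Icc 0 1 ×ˢ Icc 0 T') := by
  have hH : ContinuousOn (fun p : ℝ × ℝ => H p.1 (min p.2 T)) (Icc 0 1 ×ˢ Icc 0 T') :=
    h.continuousOn.comp (continuous_fst.prodMk (continuous_snd.min continuous_const)).continuousOn
      fun p hp => ⟨hp.1, le_min hp.2.1 hT, min_le_right _ _⟩
  have hHT : ContinuousOn (fun p : ℝ × ℝ => H p.1 T) (Icc 0 1 ×ˢ Icc 0 T') :=
    h.continuousOn.comp (continuous_fst.prodMk continuous_const).continuousOn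
      fun p hp => ⟨hp.1, hT, le_rfl⟩
  have hγmax : ContinuousOn (fun p : ℝ × ℝ => γ (max p.2 T)) (Icc 0 1 ×ˢ Icc 0 T') :=
    hγ.comp (continuous_snd.max continuous_const).continuousOn
      fun p hp => ⟨le_max_right _ _, max_le hp.2.2 hTT'⟩
  exact hH.add (((continuous_avoidanceWeight hΩ hne hγT).comp_continuousOn hHT).smul
    (hγmax.sub continuousOn_const))

theorem IsSymmetricHomotopyOn.extendHomotopy (h : IsSymmetricHomotopyOn Ω γ T H)
    (hclosed : IsClosed Ω) (h0 : (0 : E) ∈ Ω) (hΩ : ∀ ω ∈ Ω, ∀ ω' ∈ Ω, ω + ω' ∈ Ω)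
    (hT : 0 ≤ T) (hTT' : T ≤ T') (hγ : ContinuousOn γ (Icc T T'))
    (hstep : ∀ u ∈ Icc T T', ‖γ u - γ T‖ < infDist (γ T) Ω) :
    IsSymmetricHomotopyOn Ω γ T' (extendHomotopy Ω γ T H) := by
  have hne : Ω.Nonempty := ⟨0, h0⟩
  have hγT : 0 < infDist (γ T) Ω := by simpa using hstep T ⟨le_rfl, hTT'⟩
  have hTmem : T ∈ Icc 0 T := ⟨hT, le_rfl⟩
  have hlow : ∀ u ∈ Icc 0 T', u ≤ T → u ∈ Icc 0 T := fun u hu hle => ⟨hu.1, hle⟩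
  have hhigh : ∀ u ∈ Icc 0 T', T ≤ u → u ∈ Icc T T' := fun u hu hge => ⟨hge, hu.2⟩
  refine ⟨h.continuousOn_extendHomotopy hΩ hne hT hTT' hγ hγT, fun u hu => ?_,
    fun s hs u hu hpos => ?_, fun s hs u hu => ?_, fun u hu => ?_⟩ <;>
    rcases le_total u T with hle | hge
  · rw [extendHomotopy_of_le hle, h.apply_zero u (hlow u hu hle)]
  · rw [extendHomotopy_of_ge hge, h.apply_zero T hTmem, avoidanceWeight_zero h0, zero_smul,
      add_zero]
  · rw [extendHomotopy_of_le hle]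
    exact h.notMem s hs u (hlow u hu hle) hpos
  · rw [extendHomotopy_of_ge hge]
    exact add_avoidanceWeight_smul_notMem hclosed hΩ hne (h.notMem s hs T hTmem hpos)
      (hstep u (hhigh u hu hge))
  · simp only [extendHomotopy_of_le hle, h.symm s hs u (hlow u hu hle)]
  · have hsymm := h.symm s hs T hTmem
    rw [h.apply_one T hTmem] at hsymm
    rw [extendHomotopy_of_ge hge, extendHomotopy_of_ge hge, extendHomotopy_of_ge hge,
      h.apply_one T hTmem, avoidanceWeight_self h0 hγT, ← hsymm, avoidanceWeight_sub hΩ hne hγT,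
      sub_smul, one_smul]
    abel
  · rw [extendHomotopy_of_le hle, h.apply_one u (hlow u hu hle)]
  · rw [extendHomotopy_of_ge hge, h.apply_one T hTmem, avoidanceWeight_self h0 hγT, one_smul,
      add_sub_cancel]

theorem exists_isSymmetricHomotopyOn_of_partition (hclosed : IsClosed Ω) (h0 : (0 : E) ∈ Ω)
    (hΩ : ∀ ω ∈ Ω, ∀ ω' ∈ Ω, ω + ω' ∈ Ω) (hγ0 : γ 0 ≠ 0)
    (hsmall : ∀ ω ∈ Ω, ω ≠ 0 → ‖γ 0‖ < ‖ω‖) {t : ℕ → ℝ} (ht0 : t 0 = 0) (ht : Monotone t)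
    (n : ℕ) (hγ : ContinuousOn γ (Icc 0 (t n)))
    (hstep : ∀ j < n, ∀ u ∈ Icc (t j) (t (j + 1)), ‖γ u - γ (t j)‖ < infDist (γ (t j)) Ω) :
    ∃ H, IsSymmetricHomotopyOn Ω γ (t n) H ∧ ∀ s, H s 0 = s • γ 0 := by
  induction n with
  | zero => exact ⟨_, ht0 ▸ isSymmetricHomotopyOn_segment hγ0 hsmall, fun _ => by rw [ht0]⟩
  | succ n ih =>
    have htn : 0 ≤ t n := ht0 ▸ ht n.zero_le
    obtain ⟨H, hH, hH0⟩ := ih (hγ.mono (Icc_subset_Icc_right (ht n.le_succ)))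
      fun j hj => hstep j (by omega)
    refine ⟨extendHomotopy Ω γ (t n) H, hH.extendHomotopy hclosed h0 hΩ htn (ht n.le_succ)
      (hγ.mono (Icc_subset_Icc_left htn)) (hstep n n.lt_succ_self), fun s => ?_⟩
    rw [extendHomotopy_of_le htn, hH0]

end Homotopy

theorem ContinuousOn.exists_pos_le_infDist {X : Type*} [PseudoMetricSpace X] {γ : ℝ → X}
    {Ω : Set X} (hγ : ContinuousOn γ (Icc 0 1)) (hclosed : IsClosed Ω) (hne : Ω.Nonempty)
    (hγΩ : ∀ u ∈ Icc (0 : ℝ) 1, γ u ∉ Ω) : ∃ δ > 0, ∀ u ∈ Icc (0 : ℝ) 1, δ ≤ infDist (γ u) Ω := by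
  obtain ⟨u₀, hu₀, hmin⟩ := isCompact_Icc.exists_isMinOn (nonempty_Icc.2 zero_le_one)
    ((continuous_infDist_pt Ω).comp_continuousOn hγ)
  exact ⟨_, (hclosed.notMem_iff_infDist_pos hne).1 (hγΩ u₀ hu₀), fun u hu => hmin hu⟩

theorem ContinuousOn.exists_partition_dist_lt {X : Type*} [PseudoMetricSpace X] {γ : ℝ → X}
    (hγ : ContinuousOn γ (Icc 0 1)) {δ : ℝ} (hδ : 0 < δ) :
    ∃ n : ℕ, ∃ t : ℕ → ℝ, t 0 = 0 ∧ t n = 1 ∧ Monotone t ∧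
      ∀ j < n, ∀ u ∈ Icc (t j) (t (j + 1)), dist (γ u) (γ (t j)) < δ := by
  obtain ⟨η, hη, hγη⟩ := Metric.uniformContinuousOn_iff.1
    (isCompact_Icc.uniformContinuousOn_of_continuous hγ) δ hδ
  obtain ⟨n, hn⟩ := exists_nat_one_div_lt hη
  have hN : (0 : ℝ) < n + 1 := by positivity
  refine ⟨n + 1, fun j => j / (n + 1), by simp, by field_simp; push_cast; ring,
    fun i j hij => by dsimp only; gcongr, fun j hj u ⟨hlo, hhi⟩ => ?_⟩
  push_cast at hlo hhi ⊢
  have hj0 : 0 ≤ (j : ℝ) / (n + 1) := by positivity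
  have hj1 : (j + 1 : ℝ) / (n + 1) ≤ 1 := (div_le_one hN).2 (by exact_mod_cast hj)
  refine hγη u ⟨hj0.trans hlo, hhi.trans hj1⟩ _ ⟨hj0, (by gcongr; linarith : _ ≤ _).trans hj1⟩ ?_
  rw [Real.dist_eq, abs_of_nonneg (sub_nonneg.2 hlo)]
  calc u - j / (n + 1) ≤ (j + 1) / (n + 1) - j / (n + 1) := by linarith
    _ = 1 / (n + 1) := by ring
    _ < η := hn

theorem stmt_19_general (Ω : Set ℂ) (hclosed : IsClosed Ω)
    (h0 : (0 : ℂ) ∈ Ω) (hadd : ∀ ω ∈ Ω, ∀ ω' ∈ Ω, ω + ω' ∈ Ω)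
    (γ : ℝ → ℂ) (hγcont : ContinuousOn γ (Set.Icc 0 1))
    (hγΩ : ∀ u ∈ Set.Icc (0:ℝ) 1, γ u ∉ Ω)
    (hγ0 : γ 0 ≠ 0) (hsmall : ∀ ω ∈ Ω, ω ≠ 0 → ‖γ 0‖ < ‖ω‖) :
    ∃ H : ℝ → ℝ → ℂ,
      ContinuousOn (fun p : ℝ × ℝ => H p.1 p.2) ((Set.Icc (0:ℝ) 1) ×ˢ (Set.Icc (0:ℝ) 1)) ∧
      (∀ u ∈ Set.Icc (0:ℝ) 1, H 0 u = 0) ∧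
      (∀ s ∈ Set.Icc (0:ℝ) 1, ∀ u ∈ Set.Icc (0:ℝ) 1, 0 < s → H s u ∉ Ω) ∧
      (∀ s ∈ Set.Icc (0:ℝ) 1, ∀ u ∈ Set.Icc (0:ℝ) 1, H 1 u - H s u = H (1 - s) u) ∧
      (∀ u ∈ Set.Icc (0:ℝ) 1, H 1 u = γ u) ∧
      (∀ s ∈ Set.Icc (0:ℝ) 1, H s 0 = (s : ℂ) * γ 0) := by
  obtain ⟨δ, hδ, hδγ⟩ := hγcont.exists_pos_le_infDist hclosed ⟨0, h0⟩ hγΩ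
  obtain ⟨n, t, ht0, htn, ht, hdist⟩ := hγcont.exists_partition_dist_lt hδ
  have hstep : ∀ j < n, ∀ u ∈ Icc (t j) (t (j + 1)), ‖γ u - γ (t j)‖ < infDist (γ (t j)) Ω :=
    fun j hj u hu => by
      rw [← dist_eq_norm]
      exact (hdist j hj u hu).trans_le (hδγ _ ⟨ht0 ▸ ht j.zero_le, htn ▸ ht hj.le⟩)
  obtain ⟨H, hH, hH0⟩ := exists_isSymmetricHomotopyOn_of_partition hclosed h0 hadd hγ0 hsmall
    ht0 ht n (htn ▸ hγcont) hstep
  rw [htn] at hH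
  exact ⟨H, hH.continuousOn, hH.apply_zero, hH.notMem, hH.symm, hH.apply_one,
    fun s _ => by rw [hH0, Complex.real_smul]⟩

/-- Existence of symmetric `Ω`-homotopies: if `Ω ⊆ ℂ` is nonempty, closed, discrete,
contains `0` and is stable under addition, then every (piecewise `C¹`) path
`γ : [0,1] → ℂ∖Ω` starting at a nonzero point closer to `0` than every point of
`Ω∖{0}` is the endpoint path of a symmetric `Ω`-homotopy whose initial path is the
segment `s ↦ s·γ(0)`. -/
theorem stmt_19 (Ω : Set ℂ) (hne : Ω.Nonempty) (hclosed : IsClosed Ω)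
    (hdisc : ∀ ω ∈ Ω, ∃ ε : ℝ, 0 < ε ∧ ∀ ω' ∈ Ω, dist ω' ω < ε → ω' = ω)
    (h0 : (0 : ℂ) ∈ Ω) (hadd : ∀ ω ∈ Ω, ∀ ω' ∈ Ω, ω + ω' ∈ Ω)
    (γ : ℝ → ℂ) (hγcont : ContinuousOn γ (Set.Icc 0 1))
    (hγpc : ∃ n : ℕ, ∃ t : ℕ → ℝ, t 0 = 0 ∧ t n = 1 ∧ (∀ i < n, t i < t (i + 1)) ∧
      ∀ i < n, ContDiffOn ℝ 1 γ (Set.Icc (t i) (t (i + 1))))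
    (hγΩ : ∀ u ∈ Set.Icc (0:ℝ) 1, γ u ∉ Ω)
    (hγ0 : γ 0 ≠ 0) (hsmall : ∀ ω ∈ Ω, ω ≠ 0 → ‖γ 0‖ < ‖ω‖) :
    ∃ H : ℝ → ℝ → ℂ,
      ContinuousOn (fun p : ℝ × ℝ => H p.1 p.2) ((Set.Icc (0:ℝ) 1) ×ˢ (Set.Icc (0:ℝ) 1)) ∧
      (∀ u ∈ Set.Icc (0:ℝ) 1, H 0 u = 0) ∧
      (∀ s ∈ Set.Icc (0:ℝ) 1, ∀ u ∈ Set.Icc (0:ℝ) 1, 0 < s → H s u ∉ Ω) ∧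
      (∀ s ∈ Set.Icc (0:ℝ) 1, ∀ u ∈ Set.Icc (0:ℝ) 1, H 1 u - H s u = H (1 - s) u) ∧
      (∀ u ∈ Set.Icc (0:ℝ) 1, H 1 u = γ u) ∧
      (∀ s ∈ Set.Icc (0:ℝ) 1, H s 0 = (s : ℂ) * γ 0) :=
  stmt_19_general Ω hclosed h0 hadd γ hγcont hγΩ hγ0 hsmall
end
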